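/- arXiv:1611.10111 — 3 statements merged into one kernel-verified Lean document; each statement's English description precedes it below -/
import Mathlib

section
/- For every β > 1 (not a simple Parry number), the lower density D̲(β) = liminf_{n→∞} (-log_β |I_n^P(β)|)/n equals 1. -/
open Filter Topology

/-- The β-transformation `T_β x = βx - ⌊βx⌋`. -/
noncomputable def Tb (β : ℝ) (x : ℝ) : ℝ := β * x - ⌊β * x⌋

/-- The (n+1)-st digit `ε_{n+1}(x, β) = ⌊β T_β^{n} x⌋` of the β-expansion of `x`. -/
noncomputable def digit (β : ℝ) (x : ℝ) (n : ℕ) : ℕ := (⌊β * (Tb β)^[n] x⌋).toNat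

/-- Strict lexicographical order on sequences of naturals. -/
def lexLt (a b : ℕ → ℕ) : Prop := ∃ k, (∀ j, j < k → a j = b j) ∧ a k < b k

def lexLe (a b : ℕ → ℕ) : Prop := lexLt a b ∨ a = b

/-- A finite word padded with zeros to an infinite sequence. -/
def pad {n : ℕ} (ω : Fin n → ℕ) : ℕ → ℕ := fun k => if h : k < n then ω ⟨k, h⟩ else 0

/-- The prefix of length `m` of a padded word, again padded with zeros. -/
def trunc {n : ℕ} (ω : Fin n → ℕ) (m : ℕ) : ℕ → ℕ := fun k => if k < m then pad ω k else 0

/-- A word `ω` of length `n` is self-admissible if `σ^i ω ≤_lex (ω_1, …, ω_{n-i})`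
for all `1 ≤ i < n` (comparison after padding with zeros). -/
def selfAdmissible {n : ℕ} (ω : Fin n → ℕ) : Prop :=
  ∀ i, 1 ≤ i → i < n → lexLe (fun k => pad ω (k + i)) (trunc ω (n - i))

/-- Lexicographic order on words of the same length. -/
def wordLt {n : ℕ} (ω ω' : Fin n → ℕ) : Prop := lexLt (pad ω) (pad ω')

def wordLe {n : ℕ} (ω ω' : Fin n → ℕ) : Prop := wordLt ω ω' ∨ ω = ω'

/-- The recurrence time `τ(ω)`: the least `1 ≤ k < n` with
`σ^k(ω_1,…,ω_n) = (ω_1,…,ω_{n-k})`, and `n` if there is no such `k`. -/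
noncomputable def tau {n : ℕ} (ω : Fin n → ℕ) : ℕ :=
  sInf ({k | 1 ≤ k ∧ k < n ∧ ∀ j, j < n - k → pad ω (k + j) = pad ω j} ∪ {n})

/-- The cylinder of the word `ω` in the parameter space `(1, ∞)`. -/
def cylP (n : ℕ) (ω : Fin n → ℕ) : Set ℝ := {β : ℝ | 1 < β ∧ ∀ i : Fin n, digit β 1 i = ω i}

/-- The first `n` digits of the β-expansion of `1`. -/
noncomputable def prefixW (β : ℝ) (n : ℕ) : Fin n → ℕ := fun i => digit β 1 i

/-- The `n`-th recurrence time `τ_n(β)` of `β`. -/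
noncomputable def tauN (β : ℝ) (n : ℕ) : ℕ := tau (prefixW β n)

/-- `t_n(β) = n - ⌊n / τ_n(β)⌋ τ_n(β)`. -/
noncomputable def tN (β : ℝ) (n : ℕ) : ℕ := n - (n / tauN β n) * tauN β n

/-- Left endpoint `β̲_n` of the `n`-th cylinder of `β` in the parameter space. -/
noncomputable def lEnd (β : ℝ) (n : ℕ) : ℝ := sInf (cylP n (prefixW β n))

/-- Right endpoint `β̄_n` of the `n`-th cylinder of `β` in the parameter space. -/
noncomputable def rEnd (β : ℝ) (n : ℕ) : ℝ := sSup (cylP n (prefixW β n))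

/-- The set `Σ_β^n` of β-admissible words of length `n`. -/
def SigmaB (β : ℝ) (n : ℕ) : Set (Fin n → ℕ) :=
  {w | ∃ x : ℝ, 0 ≤ x ∧ x < 1 ∧ ∀ i : Fin n, digit β x i = w i}

open Classical in
/-- The infinite β-expansion `ε*(1, β)` of `1`. -/
noncomputable def epsStar (β : ℝ) : ℕ → ℕ :=
  if h : ∃ m, digit β 1 m ≠ 0 ∧ ∀ k, m < k → digit β 1 k = 0 then
    fun n =>
      if n % (h.choose + 1) = h.choose then digit β 1 h.choose - 1
      else digit β 1 (n % (h.choose + 1))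
  else digit β 1


namespace LDProof


/-- orbit of 1 -/
noncomputable def torb (γ : ℝ) (i : ℕ) : ℝ := (Tb γ)^[i] 1

lemma torb_zero (γ : ℝ) : torb γ 0 = 1 := rfl

lemma torb_succ (γ : ℝ) (i : ℕ) : torb γ (i + 1) = Tb γ (torb γ i) := by
  simp [torb, Function.iterate_succ_apply']

lemma Tb_eq_fract (γ x : ℝ) : Tb γ x = Int.fract (γ * x) := rfl

lemma torb_nonneg (γ : ℝ) : ∀ i, 0 ≤ torb γ i
  | 0 => by norm_num [torb_zero]
  | (i+1) => by rw [torb_succ, Tb_eq_fract]; exact Int.fract_nonneg _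

lemma torb_lt_one (γ : ℝ) {i : ℕ} (hi : 1 ≤ i) : torb γ i < 1 := by
  obtain ⟨j, rfl⟩ := Nat.exists_eq_add_of_le hi
  rw [Nat.add_comm, torb_succ, Tb_eq_fract]
  exact Int.fract_lt_one _

lemma torb_le_one (γ : ℝ) (i : ℕ) : torb γ i ≤ 1 := by
  cases i with
  | zero => simp [torb_zero]
  | succ j => exact le_of_lt (torb_lt_one γ (Nat.succ_le_succ (Nat.zero_le j)))

lemma digit_cast (γ : ℝ) (hγ : 0 ≤ γ) (i : ℕ) :
    (digit γ 1 i : ℝ) = (⌊γ * torb γ i⌋ : ℤ) := by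
  have h0 : (0:ℤ) ≤ ⌊γ * torb γ i⌋ :=
    Int.floor_nonneg.mpr (mul_nonneg hγ (torb_nonneg γ i))
  rw [digit]
  norm_cast
  exact Int.toNat_of_nonneg h0

lemma digit_le (γ : ℝ) (hγ : 0 ≤ γ) (i : ℕ) :
    (digit γ 1 i : ℝ) ≤ γ * torb γ i := by
  rw [digit_cast γ hγ]; exact Int.floor_le _

lemma lt_digit_add_one (γ : ℝ) (hγ : 0 ≤ γ) (i : ℕ) :
    γ * torb γ i < digit γ 1 i + 1 := by
  rw [digit_cast γ hγ]; push_cast; exact Int.lt_floor_add_one _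

lemma torb_succ_eq (γ : ℝ) (hγ : 0 ≤ γ) (i : ℕ) :
    torb γ (i + 1) = γ * torb γ i - digit γ 1 i := by
  rw [torb_succ, Tb_eq_fract, Int.fract, digit_cast γ hγ]

lemma one_le_digit_zero (γ : ℝ) (hγ : 1 < γ) : 1 ≤ digit γ 1 0 := by
  have h1 : (1:ℤ) ≤ ⌊γ * (Tb γ)^[0] 1⌋ := by
    simp only [Function.iterate_zero, id_eq, mul_one]
    exact Int.le_floor.mpr (by exact_mod_cast hγ.le)
  rw [digit]
  omega

lemma sum_formula (γ : ℝ) (hγ : 0 < γ) : ∀ n : ℕ,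
    (∑ i ∈ Finset.range n, (digit γ 1 i : ℝ) * (γ ^ (i+1))⁻¹) + (γ ^ n)⁻¹ * torb γ n = 1 := by
  intro n
  induction n with
  | zero => simp [torb_zero]
  | succ n ih =>
    rw [Finset.sum_range_succ]
    have hne : γ ^ (n+1) ≠ 0 := by positivity
    have h2 : (γ ^ (n+1))⁻¹ * torb γ (n+1)
        = (γ ^ n)⁻¹ * torb γ n - (digit γ 1 n : ℝ) * (γ ^ (n+1))⁻¹ := by
      rw [torb_succ_eq γ hγ.le]
      field_simp
      ring
    rw [add_assoc]
    rw [show (digit γ 1 n : ℝ) * (γ ^ (n+1))⁻¹ + (γ ^ (n+1))⁻¹ * torb γ (n+1)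
        = (γ ^ n)⁻¹ * torb γ n by rw [h2]; ring]
    exact ih



section Beta

variable {β : ℝ}

lemma torb_pos (hpar : ¬ ∃ m, ∀ k, m ≤ k → digit β 1 k = 0) : ∀ i, 0 < torb β i := by
  intro i
  rcases lt_or_eq_of_le (torb_nonneg β i) with h | h
  · exact h
  · exfalso
    have hz : ∀ j, torb β (i + j) = 0 := by
      intro j
      induction j with
      | zero => exact h.symm
      | succ j ihj =>
        rw [show i + (j+1) = (i + j) + 1 by ring, torb_succ, ihj]
        simp [Tb]
    refine hpar ⟨i, fun k hk => ?_⟩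
    obtain ⟨j, rfl⟩ := Nat.exists_eq_add_of_le hk
    have : (⌊β * torb β (i + j)⌋ : ℤ) = 0 := by rw [hz j]; simp
    rw [digit]
    rw [show (Tb β)^[i+j] 1 = torb β (i+j) from rfl, this]
    rfl

lemma freq_digit_ne (hpar : ¬ ∃ m, ∀ k, m ≤ k → digit β 1 k = 0) :
    ∀ m, ∃ k, m ≤ k ∧ digit β 1 k ≠ 0 := by
  push_neg at hpar
  exact hpar

lemma torb_ge_aux (hβ : 1 < β) {m : ℕ} (hm : digit β 1 m ≠ 0) :
    ∀ j i, i + j = m → (β ^ (j+1))⁻¹ ≤ torb β i := by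
  have hb0 : (0:ℝ) < β := lt_trans one_pos hβ
  have hbase : 1 ≤ β * torb β m := by
    have h1 : 1 ≤ digit β 1 m := Nat.one_le_iff_ne_zero.mpr hm
    calc (1:ℝ) ≤ (digit β 1 m : ℝ) := by exact_mod_cast h1
    _ ≤ β * torb β m := digit_le β hb0.le m
  intro j
  induction j with
  | zero =>
    intro i hi
    have : i = m := by omega
    subst this
    rw [pow_one, inv_eq_one_div, div_le_iff₀ hb0]
    nlinarith [hbase]
  | succ j ih =>
    intro i hi
    have h1 := ih (i+1) (by omega)
    have hdignn : (0:ℝ) ≤ (digit β 1 i : ℝ) := Nat.cast_nonneg _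
    have h2 : (β ^ (j+1))⁻¹ ≤ β * torb β i := by
      refine le_trans h1 ?_
      rw [torb_succ_eq β hb0.le]
      linarith
    have h3 : (β ^ (j+1))⁻¹ * β⁻¹ ≤ (β * torb β i) * β⁻¹ :=
      mul_le_mul_of_nonneg_right h2 (inv_nonneg.mpr hb0.le)
    have h4 : (β * torb β i) * β⁻¹ = torb β i := by field_simp
    rw [pow_succ, mul_inv]
    linarith

lemma torb_ge (hβ : 1 < β) {m i : ℕ} (hm : digit β 1 m ≠ 0) (hi : i ≤ m) :
    (β ^ (m - i + 1))⁻¹ ≤ torb β i :=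
  torb_ge_aux hβ hm (m - i) i (by omega)

lemma left_perturb (hβ : 1 < β) {s : ℝ} (hs : 0 < s) (hγ1 : 1 < β - s) (n : ℕ)
    (hcond : ∀ i, 1 ≤ i → i ≤ n → s * i * β ^ (i-1) < torb β i) :
    ∀ i, i ≤ n → (∀ j, j < i → digit (β - s) 1 j = digit β 1 j) ∧
      0 ≤ torb β i - torb (β - s) i ∧ torb β i - torb (β - s) i ≤ s * i * β ^ (i-1) := by
  have hb0 : (0:ℝ) < β := by linarith
  have hγ0 : (0:ℝ) < β - s := by linarith
  intro i
  induction i with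
  | zero =>
    intro _
    exact ⟨fun j hj => absurd hj (Nat.not_lt_zero j), by simp [torb_zero], by simp [torb_zero]⟩
  | succ i ih =>
    intro hin
    obtain ⟨hdig, hΔ0, hΔ1⟩ := ih (by omega)
    have ha1 : torb β i ≤ 1 := torb_le_one β i
    have hb1 : 0 ≤ torb (β - s) i := torb_nonneg _ i
    have hafloor : β * torb β i = (digit β 1 i : ℝ) + torb β (i+1) := by
      rw [torb_succ_eq β hb0.le]; ring
    have hE0 : 0 ≤ β * torb β i - (β - s) * torb (β - s) i := by nlinarith
    have hpow1 : (1:ℝ) ≤ β ^ i := one_le_pow₀ hβ.le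
    have hpowstep : s * (i:ℝ) * β ^ (i-1) * β ≤ s * (i:ℝ) * β ^ i := by
      cases i with
      | zero => simp
      | succ k =>
        have h5 : (k+1) - 1 = k := rfl
        rw [h5]
        exact le_of_eq (by rw [pow_succ]; ring)
    have hEub : β * torb β i - (β - s) * torb (β - s) i ≤ s * ((i:ℝ)+1) * β ^ i := by
      have e1 : β * torb β i - (β - s) * torb (β - s) i
          = (β - s) * (torb β i - torb (β - s) i) + s * torb β i := by ring
      have e2 : (β - s) * (torb β i - torb (β - s) i) ≤ β * (torb β i - torb (β - s) i) :=
        mul_le_mul_of_nonneg_right (by linarith) hΔ0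
      have e3 : β * (torb β i - torb (β - s) i) ≤ β * (s * i * β ^ (i-1)) :=
        mul_le_mul_of_nonneg_left hΔ1 hb0.le
      have e4 : β * (s * (i:ℝ) * β ^ (i-1)) = s * (i:ℝ) * β ^ (i-1) * β := by ring
      nlinarith
    have hnext : s * ((i:ℝ)+1) * β ^ i < torb β (i+1) := by
      have := hcond (i+1) (by omega) hin
      have hc : ((i+1:ℕ):ℝ) = (i:ℝ) + 1 := by push_cast; ring
      rw [show (i+1) - 1 = i from rfl] at this
      rw [← hc]; exact this
    have hγb_lt : (β - s) * torb (β - s) i < (digit β 1 i : ℝ) + 1 := by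
      have := lt_digit_add_one β hb0.le i
      linarith
    have hγb_ge : (digit β 1 i : ℝ) ≤ (β - s) * torb (β - s) i := by
      have : (β - s) * torb (β - s) i
          = (digit β 1 i : ℝ) + torb β (i+1) - (β * torb β i - (β - s) * torb (β - s) i) := by
        rw [← hafloor]; ring
      nlinarith
    have hfd : ⌊(β - s) * torb (β - s) i⌋ = (digit β 1 i : ℤ) := by
      rw [Int.floor_eq_iff]
      constructor
      · exact_mod_cast hγb_ge
      · exact_mod_cast hγb_lt
    have hdigγ : digit (β - s) 1 i = digit β 1 i := by
      rw [digit, show (Tb (β - s))^[i] 1 = torb (β - s) i from rfl, hfd]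
      simp
    refine ⟨?_, ?_, ?_⟩
    · intro j hj
      rcases Nat.lt_or_ge j i with h | h
      · exact hdig j h
      · have : j = i := by omega
        subst this; exact hdigγ
    · have : torb β (i+1) - torb (β - s) (i+1)
          = β * torb β i - (β - s) * torb (β - s) i := by
        rw [torb_succ_eq β hb0.le, torb_succ_eq (β - s) hγ0.le, hdigγ]; ring
      linarith
    · have heq : torb β (i+1) - torb (β - s) (i+1)
          = β * torb β i - (β - s) * torb (β - s) i := by
        rw [torb_succ_eq β hb0.le, torb_succ_eq (β - s) hγ0.le, hdigγ]; ring
      have hc : ((i+1:ℕ):ℝ) = (i:ℝ) + 1 := by push_cast; ring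
      rw [heq, show (i+1) - 1 = i from rfl, hc]
      exact hEub

end Beta

section Cyl

variable {β : ℝ}

lemma mem_cyl_self (hβ : 1 < β) (n : ℕ) : β ∈ cylP n (prefixW β n) :=
  ⟨hβ, fun _ => rfl⟩

lemma cyl_digit {n : ℕ} {γ : ℝ} (hγ : γ ∈ cylP n (prefixW β n)) {i : ℕ} (hi : i < n) :
    digit γ 1 i = digit β 1 i :=
  hγ.2 ⟨i, hi⟩

lemma digit_zero_int (γ : ℝ) (hγ : 1 < γ) : ((digit γ 1 0 : ℕ) : ℤ) = ⌊γ⌋ := by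
  rw [digit]
  simp only [Function.iterate_zero, id_eq, mul_one]
  exact Int.toNat_of_nonneg (Int.floor_nonneg.mpr (by linarith))

lemma cyl_ub {n : ℕ} {γ : ℝ} (hn : 1 ≤ n) (hγ : γ ∈ cylP n (prefixW β n)) :
    γ < (digit β 1 0 : ℝ) + 1 := by
  have h0 : digit γ 1 0 = digit β 1 0 := cyl_digit hγ (by omega)
  have h1 : ((digit γ 1 0 : ℕ) : ℤ) = ⌊γ⌋ := digit_zero_int γ hγ.1
  have h2 : γ < (⌊γ⌋ : ℝ) + 1 := Int.lt_floor_add_one γ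
  rw [← h1, h0] at h2
  exact_mod_cast h2

lemma cyl_bddBelow (n : ℕ) : BddBelow (cylP n (prefixW β n)) :=
  ⟨1, fun _ hγ => hγ.1.le⟩

lemma cyl_bddAbove {n : ℕ} (hn : 1 ≤ n) : BddAbove (cylP n (prefixW β n)) :=
  ⟨(digit β 1 0 : ℝ) + 1, fun _ hγ => (cyl_ub hn hγ).le⟩

lemma lEnd_le_self (hβ : 1 < β) (n : ℕ) : lEnd β n ≤ β :=
  csInf_le (cyl_bddBelow n) (mem_cyl_self hβ n)

lemma self_le_rEnd (hβ : 1 < β) {n : ℕ} (hn : 1 ≤ n) : β ≤ rEnd β n :=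
  le_csSup (cyl_bddAbove hn) (mem_cyl_self hβ n)

lemma cyl_sum_eq {n : ℕ} {γ : ℝ} (hγ : γ ∈ cylP n (prefixW β n)) :
    (∑ i ∈ Finset.range n, (digit β 1 i : ℝ) * (γ ^ (i+1))⁻¹) + (γ ^ n)⁻¹ * torb γ n = 1 := by
  have h0 : (0:ℝ) < γ := lt_trans one_pos hγ.1
  have hs := sum_formula γ h0 n
  rw [show (∑ i ∈ Finset.range n, (digit β 1 i : ℝ) * (γ ^ (i+1))⁻¹)
      = ∑ i ∈ Finset.range n, (digit γ 1 i : ℝ) * (γ ^ (i+1))⁻¹ from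
    Finset.sum_congr rfl fun i hi => by rw [cyl_digit hγ (Finset.mem_range.mp hi)]]
  exact hs

/-- two parameters in the same cylinder are exponentially close -/
lemma cyl_pair {n : ℕ} (hn : 1 ≤ n) {c γ γ' : ℝ} (hc : 0 < c)
    (hγ : γ ∈ cylP n (prefixW β n)) (hγ' : γ' ∈ cylP n (prefixW β n))
    (hcγ : c ≤ γ) (hcγ' : c ≤ γ') (hle : γ ≤ γ') :
    γ' - γ ≤ γ * γ' * (c ^ n)⁻¹ := by
  have h1γ : 1 < γ := hγ.1
  have h1γ' : 1 < γ' := hγ'.1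
  have h0γ : (0:ℝ) < γ := by linarith
  have h0γ' : (0:ℝ) < γ' := by linarith
  have hsγ := cyl_sum_eq hγ
  have hsγ' := cyl_sum_eq hγ'
  set A : ℝ := ∑ i ∈ Finset.range n,
      ((digit β 1 i : ℝ) * (γ ^ (i+1))⁻¹ - (digit β 1 i : ℝ) * (γ' ^ (i+1))⁻¹) with hA
  have hAeq : A = (γ' ^ n)⁻¹ * torb γ' n - (γ ^ n)⁻¹ * torb γ n := by
    rw [hA, Finset.sum_sub_distrib]
    linarith
  have hAub : A ≤ (c ^ n)⁻¹ := by
    rw [hAeq]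
    have t1 : (γ' ^ n)⁻¹ * torb γ' n ≤ (c ^ n)⁻¹ := by
      have e1 : (γ' ^ n)⁻¹ ≤ (c ^ n)⁻¹ :=
        inv_anti₀ (by positivity) (pow_le_pow_left₀ hc.le hcγ' n)
      have e2 : torb γ' n ≤ 1 := torb_le_one γ' n
      have e3 : (0:ℝ) ≤ (γ' ^ n)⁻¹ := by positivity
      nlinarith
    have t2 : 0 ≤ (γ ^ n)⁻¹ * torb γ n := by
      have := torb_nonneg γ n
      positivity
    linarith
  have hterm0 : γ⁻¹ - γ'⁻¹ ≤ A := by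
    have hmem : (0:ℕ) ∈ Finset.range n := Finset.mem_range.mpr (by omega)
    have hnn : ∀ i ∈ Finset.range n,
        0 ≤ (digit β 1 i : ℝ) * (γ ^ (i+1))⁻¹ - (digit β 1 i : ℝ) * (γ' ^ (i+1))⁻¹ := by
      intro i _
      have e1 : (γ' ^ (i+1))⁻¹ ≤ (γ ^ (i+1))⁻¹ :=
        inv_anti₀ (by positivity) (pow_le_pow_left₀ h0γ.le hle (i+1))
      have e2 : (0:ℝ) ≤ (digit β 1 i : ℝ) := Nat.cast_nonneg _
      nlinarith
    have hsingle := Finset.single_le_sum hnn hmem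
    have hd0 : (1:ℝ) ≤ (digit β 1 0 : ℝ) := by
      have h := one_le_digit_zero γ h1γ
      rw [cyl_digit hγ (show 0 < n by omega)] at h
      exact_mod_cast h
    have e1 : (γ ^ (0+1))⁻¹ = γ⁻¹ := by norm_num
    have e2 : (γ' ^ (0+1))⁻¹ = γ'⁻¹ := by norm_num
    have e3 : γ'⁻¹ ≤ γ⁻¹ := inv_anti₀ h0γ hle
    calc γ⁻¹ - γ'⁻¹ = 1 * (γ⁻¹ - γ'⁻¹) := by ring
    _ ≤ (digit β 1 0 : ℝ) * (γ⁻¹ - γ'⁻¹) := by nlinarith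
    _ = (digit β 1 0 : ℝ) * (γ ^ (0+1))⁻¹ - (digit β 1 0 : ℝ) * (γ' ^ (0+1))⁻¹ := by
        rw [e1, e2]; ring
    _ ≤ A := hsingle
  have hfinal : γ⁻¹ - γ'⁻¹ ≤ (c ^ n)⁻¹ := le_trans hterm0 hAub
  have hid : γ * γ' * (γ⁻¹ - γ'⁻¹) = γ' - γ := by field_simp
  calc γ' - γ = γ * γ' * (γ⁻¹ - γ'⁻¹) := hid.symm
  _ ≤ γ * γ' * (c ^ n)⁻¹ := by
      apply mul_le_mul_of_nonneg_left hfinal (by positivity)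

end Cyl

section Main

variable {β : ℝ}

lemma partial_sum_le_one (γ : ℝ) (hγ : 0 < γ) (n : ℕ) :
    ∑ i ∈ Finset.range n, (digit γ 1 i : ℝ) * (γ ^ (i+1))⁻¹ ≤ 1 := by
  have h := sum_formula γ hγ n
  have h2 : 0 ≤ (γ ^ n)⁻¹ * torb γ n := by
    have := torb_nonneg γ n
    positivity
  linarith

/-- all elements of deep cylinders are bounded below by some fixed `γ₀ ∈ (1, β)` -/
lemma exists_lb (hβ : 1 < β) (hpar : ¬ ∃ m, ∀ k, m ≤ k → digit β 1 k = 0) :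
    ∃ γ₀ k₁ : _, 1 < γ₀ ∧ γ₀ < β ∧ 1 ≤ k₁ ∧
      ∀ n : ℕ, k₁ + 1 ≤ n → ∀ γ ∈ cylP n (prefixW β n), γ₀ ≤ γ := by
  obtain ⟨k₁, hk₁, hkne⟩ := freq_digit_ne hpar 1
  have hcont : ContinuousAt (fun γ : ℝ => γ⁻¹ + (γ ^ (k₁+1))⁻¹) 1 := by
    have h1 : ContinuousAt (fun γ : ℝ => γ⁻¹) 1 := continuousAt_inv₀ one_ne_zero
    have h2 : ContinuousAt (fun γ : ℝ => (γ ^ (k₁+1))⁻¹) 1 :=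
      ContinuousAt.inv₀ (continuousAt_id.pow _) (by norm_num)
    exact h1.add h2
  have hval : (fun γ : ℝ => γ⁻¹ + (γ ^ (k₁+1))⁻¹) 1 = 2 := by norm_num
  have hev : ∀ᶠ γ in 𝓝 (1:ℝ), 1 < γ⁻¹ + (γ ^ (k₁+1))⁻¹ := by
    have ht : Filter.Tendsto (fun γ : ℝ => γ⁻¹ + (γ ^ (k₁+1))⁻¹) (𝓝 1) (𝓝 2) := by
      rw [← hval]; exact hcont
    exact ht.eventually (eventually_gt_nhds (by norm_num))
  have hev' : ∀ᶠ γ in 𝓝[>] (1:ℝ), 1 < γ⁻¹ + (γ ^ (k₁+1))⁻¹ :=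
    hev.filter_mono nhdsWithin_le_nhds
  have hIoo : ∀ᶠ γ in 𝓝[>] (1:ℝ), γ ∈ Set.Ioo 1 β :=
    Filter.eventually_iff_exists_mem.mpr ⟨Set.Ioo 1 β, Ioo_mem_nhdsGT_of_mem ⟨le_refl 1, hβ⟩, fun γ hγ => hγ⟩
  obtain ⟨γ₀, hφ, hγ₀mem⟩ := (hev'.and hIoo).exists
  refine ⟨γ₀, k₁, hγ₀mem.1, hγ₀mem.2, hk₁, ?_⟩
  intro n hn γ hγmem
  by_contra hlt
  push_neg at hlt
  have h1γ : 1 < γ := hγmem.1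
  have h0γ : (0:ℝ) < γ := by linarith
  -- φ γ ≤ S_n γ ≤ 1
  have hsub : ({0, k₁} : Finset ℕ) ⊆ Finset.range n := by
    intro x hx
    simp only [Finset.mem_insert, Finset.mem_singleton] at hx
    rcases hx with rfl | rfl <;> simp [Finset.mem_range] <;> omega
  have hnn : ∀ i ∈ Finset.range n, 0 ≤ (digit γ 1 i : ℝ) * (γ ^ (i+1))⁻¹ := by
    intro i _
    positivity
  have hsum_ge := Finset.sum_le_sum_of_subset_of_nonneg hsub (fun i hi _ => hnn i hi)
  have hpair : ∑ i ∈ ({0, k₁} : Finset ℕ), (digit γ 1 i : ℝ) * (γ ^ (i+1))⁻¹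
      = (digit γ 1 0 : ℝ) * (γ ^ 1)⁻¹ + (digit γ 1 k₁ : ℝ) * (γ ^ (k₁+1))⁻¹ := by
    rw [Finset.sum_pair (by omega : (0:ℕ) ≠ k₁)]
  have hd0 : (1:ℝ) ≤ (digit γ 1 0 : ℝ) := by exact_mod_cast one_le_digit_zero γ h1γ
  have hdk : (1:ℝ) ≤ (digit γ 1 k₁ : ℝ) := by
    have := cyl_digit hγmem (show k₁ < n by omega)
    rw [this]
    have : 1 ≤ digit β 1 k₁ := Nat.one_le_iff_ne_zero.mpr hkne
    exact_mod_cast this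
  have hφγ : γ⁻¹ + (γ ^ (k₁+1))⁻¹ ≤ 1 := by
    have hle1 := partial_sum_le_one γ h0γ n
    have e1 : (γ ^ 1)⁻¹ = γ⁻¹ := by norm_num
    have t1 : γ⁻¹ ≤ (digit γ 1 0 : ℝ) * (γ ^ 1)⁻¹ := by
      rw [e1]
      nlinarith [inv_nonneg.mpr h0γ.le]
    have t2 : (γ ^ (k₁+1))⁻¹ ≤ (digit γ 1 k₁ : ℝ) * (γ ^ (k₁+1))⁻¹ := by
      have : (0:ℝ) ≤ (γ ^ (k₁+1))⁻¹ := by positivity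
      nlinarith
    calc γ⁻¹ + (γ ^ (k₁+1))⁻¹
        ≤ (digit γ 1 0 : ℝ) * (γ ^ 1)⁻¹ + (digit γ 1 k₁ : ℝ) * (γ ^ (k₁+1))⁻¹ := by linarith
    _ = ∑ i ∈ ({0, k₁} : Finset ℕ), (digit γ 1 i : ℝ) * (γ ^ (i+1))⁻¹ := hpair.symm
    _ ≤ ∑ i ∈ Finset.range n, (digit γ 1 i : ℝ) * (γ ^ (i+1))⁻¹ := hsum_ge
    _ ≤ 1 := hle1
  -- antitone: γ < γ₀ ⇒ φ γ ≥ φ γ₀ > 1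
  have h1 : γ₀⁻¹ ≤ γ⁻¹ := by
    apply inv_anti₀ h0γ hlt.le
  have h2 : (γ₀ ^ (k₁+1))⁻¹ ≤ (γ ^ (k₁+1))⁻¹ := by
    apply inv_anti₀ (by positivity) (pow_le_pow_left₀ h0γ.le hlt.le _)
  linarith

end Main

section Main2

variable {β : ℝ}

/-- the cylinder length is eventually at most `M c^{-n}` for any `c < β`. -/
lemma eventually_len_le (hβ : 1 < β) (hpar : ¬ ∃ m, ∀ k, m ≤ k → digit β 1 k = 0)
    {c : ℝ} (hc1 : 1 < c) (hcβ : c < β) :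
    ∀ᶠ n in Filter.atTop,
      rEnd β n - lEnd β n ≤ ((digit β 1 0 : ℝ) + 1)^2 * (c ^ n)⁻¹ := by
  obtain ⟨γ₀, k₁, hγ₀1, hγ₀β, hk₁, hlb⟩ := exists_lb hβ hpar
  set M : ℝ := ((digit β 1 0 : ℝ) + 1)^2 with hM
  have hMpos : 0 < M := by positivity
  have htend : Filter.Tendsto (fun n : ℕ => M * (γ₀ ^ n)⁻¹) Filter.atTop (𝓝 0) := by
    have h1 : Filter.Tendsto (fun n : ℕ => (γ₀⁻¹) ^ n) Filter.atTop (𝓝 0) := by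
      apply tendsto_pow_atTop_nhds_zero_of_lt_one
      · positivity
      · rw [inv_lt_one_iff₀]; right; exact hγ₀1
    have h2 : Filter.Tendsto (fun n : ℕ => M * (γ₀⁻¹) ^ n) Filter.atTop (𝓝 (M * 0)) :=
      h1.const_mul M
    rw [mul_zero] at h2
    refine h2.congr fun n => ?_
    rw [inv_pow]
  have hsmall : ∀ᶠ n in Filter.atTop, M * (γ₀ ^ n)⁻¹ < β - c :=
    htend.eventually (eventually_lt_nhds (by linarith))
  filter_upwards [hsmall, Filter.eventually_ge_atTop (k₁ + 1)] with n hsm hn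
  have hn1 : 1 ≤ n := by omega
  have hβub : β < (digit β 1 0 : ℝ) + 1 := cyl_ub hn1 (mem_cyl_self hβ n)
  -- every cylinder element is ≥ c
  have hge_c : ∀ γ ∈ cylP n (prefixW β n), c ≤ γ := by
    intro γ hγ
    rcases le_or_gt β γ with h | h
    · linarith
    · have hb := cyl_pair hn1 (by linarith : (0:ℝ) < γ₀) hγ (mem_cyl_self hβ n)
        (hlb n hn γ hγ) hγ₀β.le h.le
      have hγub : γ < (digit β 1 0 : ℝ) + 1 := cyl_ub hn1 hγ
      have h0γ : 0 < γ := lt_trans one_pos hγ.1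
      have : γ * β * (γ₀ ^ n)⁻¹ ≤ M * (γ₀ ^ n)⁻¹ := by
        apply mul_le_mul_of_nonneg_right _ (by positivity)
        rw [hM]
        nlinarith
      linarith
  -- pairwise bound with base c
  have hpairs : ∀ γ ∈ cylP n (prefixW β n), ∀ γ' ∈ cylP n (prefixW β n),
      γ' - γ ≤ M * (c ^ n)⁻¹ := by
    intro γ hγ γ' hγ'
    rcases le_or_gt γ' γ with h | h
    · have : (0:ℝ) ≤ M * (c ^ n)⁻¹ := by positivity
      linarith
    · have hb := cyl_pair hn1 (by linarith : (0:ℝ) < c) hγ hγ' (hge_c γ hγ) (hge_c γ' hγ')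
        h.le
      have hγub : γ < (digit β 1 0 : ℝ) + 1 := cyl_ub hn1 hγ
      have hγ'ub : γ' < (digit β 1 0 : ℝ) + 1 := cyl_ub hn1 hγ'
      have h0γ : 0 < γ := lt_trans one_pos hγ.1
      have h0γ' : 0 < γ' := lt_trans one_pos hγ'.1
      have : γ * γ' * (c ^ n)⁻¹ ≤ M * (c ^ n)⁻¹ := by
        apply mul_le_mul_of_nonneg_right _ (by positivity)
        rw [hM]; nlinarith
      linarith
  -- conclude for sSup and sInf
  have hne : (cylP n (prefixW β n)).Nonempty := ⟨β, mem_cyl_self hβ n⟩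
  have hsup : rEnd β n ≤ lEnd β n + M * (c ^ n)⁻¹ := by
    apply csSup_le hne
    intro γ' hγ'
    have : γ' - M * (c ^ n)⁻¹ ≤ lEnd β n := by
      apply le_csInf hne
      intro γ hγ
      have := hpairs γ hγ γ' hγ'
      linarith
    linarith
  linarith

/-- the cylinder contains `[β - s, β]` under the perturbation conditions -/
lemma len_ge_of_perturb (hβ : 1 < β) {n : ℕ} (hn : 1 ≤ n) {s : ℝ} (hs : 0 < s)
    (hγ1 : 1 < β - s)
    (hcond : ∀ i, 1 ≤ i → i ≤ n → s * i * β ^ (i-1) < torb β i) :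
    s ≤ rEnd β n - lEnd β n := by
  have hmem : β - s ∈ cylP n (prefixW β n) := by
    refine ⟨hγ1, fun i => ?_⟩
    exact ((left_perturb hβ hs hγ1 n hcond) n le_rfl).1 i i.isLt
  have h1 : lEnd β n ≤ β - s := csInf_le (cyl_bddBelow n) hmem
  have h2 : β ≤ rEnd β n := self_le_rEnd hβ hn
  linarith

lemma len_pos (hβ : 1 < β) (hpar : ¬ ∃ m, ∀ k, m ≤ k → digit β 1 k = 0)
    {n : ℕ} (hn : 1 ≤ n) : 0 < rEnd β n - lEnd β n := by
  have hb0 : (0:ℝ) < β := by linarith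
  have hne : (Finset.Icc 1 n).Nonempty := ⟨1, Finset.mem_Icc.mpr ⟨le_refl 1, hn⟩⟩
  set m : ℝ := (Finset.Icc 1 n).inf' hne (fun i => torb β i / (i * β ^ (i-1))) with hm
  have hmpos : 0 < m := by
    rw [hm, Finset.lt_inf'_iff]
    intro i hi
    have hi1 : 1 ≤ i := (Finset.mem_Icc.mp hi).1
    have ht := torb_pos hpar i
    have : (0:ℝ) < (i:ℝ) * β ^ (i-1) := by
      have : (1:ℝ) ≤ (i:ℝ) := by exact_mod_cast hi1
      positivity
    positivity
  set s : ℝ := min ((β - 1)/2) (m/2) with hsdef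
  have hspos : 0 < s := lt_min (by linarith) (by linarith)
  have hs2 : s ≤ (β-1)/2 := min_le_left _ _
  have hγ1 : 1 < β - s := by linarith
  have hcond : ∀ i, 1 ≤ i → i ≤ n → s * i * β ^ (i-1) < torb β i := by
    intro i h1i hin
    have hD : (0:ℝ) < (i:ℝ) * β ^ (i-1) := by
      have : (1:ℝ) ≤ (i:ℝ) := by exact_mod_cast h1i
      positivity
    have hinf : m ≤ torb β i / ((i:ℝ) * β ^ (i-1)) := by
      rw [hm]
      exact Finset.inf'_le _ (Finset.mem_Icc.mpr ⟨h1i, hin⟩)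
    have hs3 : s ≤ m/2 := min_le_right _ _
    have ht := torb_pos hpar i
    have : s * ((i:ℝ) * β ^ (i-1)) ≤ (torb β i / ((i:ℝ) * β ^ (i-1)))/2 * ((i:ℝ) * β ^ (i-1)) := by
      apply mul_le_mul_of_nonneg_right _ hD.le
      linarith
    have heq : (torb β i / ((i:ℝ) * β ^ (i-1)))/2 * ((i:ℝ) * β ^ (i-1)) = torb β i / 2 := by
      field_simp
    calc s * (i:ℝ) * β ^ (i-1) = s * ((i:ℝ) * β ^ (i-1)) := by ring
    _ ≤ torb β i / 2 := by rw [← heq]; exact this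
    _ < torb β i := by linarith
  have := len_ge_of_perturb hβ hn hspos hγ1 hcond
  linarith

lemma freq_len_ge (hβ : 1 < β) (hpar : ¬ ∃ m, ∀ k, m ≤ k → digit β 1 k = 0) :
    ∀ N : ℕ, ∃ n, N ≤ n ∧ 1 ≤ n ∧ (β ^ n)⁻¹ / (2*n) ≤ rEnd β n - lEnd β n := by
  intro N
  have hb0 : (0:ℝ) < β := by linarith
  -- choose N₀ with (β^n)⁻¹ < β - 1 for n ≥ N₀
  have htend : Filter.Tendsto (fun n : ℕ => (β ^ n)⁻¹) Filter.atTop (𝓝 0) := by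
    have h1 : Filter.Tendsto (fun n : ℕ => (β⁻¹) ^ n) Filter.atTop (𝓝 0) := by
      apply tendsto_pow_atTop_nhds_zero_of_lt_one
      · positivity
      · rw [inv_lt_one_iff₀]; right; exact hβ
    refine h1.congr fun n => ?_
    rw [inv_pow]
  have hsmall : ∀ᶠ n in Filter.atTop, (β ^ n)⁻¹ < β - 1 :=
    htend.eventually (eventually_lt_nhds (by linarith))
  obtain ⟨N₀, hN₀⟩ := Filter.eventually_atTop.mp hsmall
  obtain ⟨n, hnge, hne⟩ := freq_digit_ne hpar (max (max N 1) N₀)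
  have hnN : N ≤ n := le_trans (le_trans (le_max_left N 1) (le_max_left _ N₀)) hnge
  have hn1 : 1 ≤ n := le_trans (le_trans (le_max_right N 1) (le_max_left _ N₀)) hnge
  have hnN₀ : N₀ ≤ n := le_trans (le_max_right _ N₀) hnge
  refine ⟨n, hnN, hn1, ?_⟩
  set s : ℝ := (β ^ n)⁻¹ / (2*n) with hsdef
  have hn1R : (1:ℝ) ≤ (n:ℝ) := by exact_mod_cast hn1
  have hspos : 0 < s := by
    rw [hsdef]; positivity
  have hsle : s ≤ (β ^ n)⁻¹ := by
    rw [hsdef]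
    rw [div_le_iff₀ (by linarith : (0:ℝ) < 2*n)]
    nlinarith [inv_pos.mpr (pow_pos hb0 n)]
  have hγ1 : 1 < β - s := by
    have := hN₀ n hnN₀
    linarith
  have hcond : ∀ i, 1 ≤ i → i ≤ n → s * i * β ^ (i-1) < torb β i := by
    intro i h1i hin
    have hiR : (1:ℝ) ≤ (i:ℝ) := by exact_mod_cast h1i
    have hin' : (i:ℝ) ≤ (n:ℝ) := by exact_mod_cast hin
    have htg : (β ^ (n - i + 1))⁻¹ ≤ torb β i := torb_ge hβ hne hin
    have hpoweq : β ^ (i-1) * β ^ (n-i+1) = β ^ n := by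
      rw [← pow_add]
      congr 1
      omega
    have hkey : β ^ (i-1) * (β ^ n)⁻¹ = (β ^ (n-i+1))⁻¹ := by
      have h2 : (β ^ n : ℝ) ≠ 0 := by positivity
      have h3 : (β ^ (n-i+1) : ℝ) ≠ 0 := by positivity
      field_simp
      linarith [hpoweq]
    have e1 : s * i * β ^ (i-1) = ((i:ℝ)/(2*n)) * (β ^ (i-1) * (β ^ n)⁻¹) := by
      rw [hsdef]; ring
    rw [e1, hkey]
    have h4 : (0:ℝ) < (β ^ (n-i+1))⁻¹ := by positivity
    have h5 : (i:ℝ)/(2*n) ≤ 1/2 := by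
      rw [div_le_div_iff₀ (by linarith) (by norm_num)]
      linarith
    calc ((i:ℝ)/(2*n)) * (β ^ (n-i+1))⁻¹ ≤ (1/2) * (β ^ (n-i+1))⁻¹ := by
          apply mul_le_mul_of_nonneg_right h5 h4.le
    _ < (β ^ (n-i+1))⁻¹ := by linarith
    _ ≤ torb β i := htg
  exact len_ge_of_perturb hβ hn1 hspos hγ1 hcond

end Main2

end LDProof

open LDProof in
theorem lower_density_eq_one (β : ℝ) (hβ : 1 < β)
    (hpar : ¬ ∃ m, ∀ k, m ≤ k → digit β 1 k = 0) :
    Filter.liminf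
      (fun n : ℕ => -(Real.log (rEnd β n - lEnd β n) / Real.log β) / n)
      Filter.atTop = 1 := by
  classical
  set u : ℕ → ℝ := fun n => -(Real.log (rEnd β n - lEnd β n) / Real.log β) / n with hu
  have hb0 : (0:ℝ) < β := by linarith
  have hlogβ : 0 < Real.log β := Real.log_pos hβ
  set M : ℝ := ((digit β 1 0 : ℝ) + 1)^2 with hM
  have hMpos : (0:ℝ) < M := by positivity
  -- rewrite u n
  have hu_eq : ∀ n : ℕ, u n = (-(Real.log (rEnd β n - lEnd β n))) / ((n:ℝ) * Real.log β) := by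
    intro n
    rw [hu]
    field_simp
  -- STEP A : eventual lower bound
  have stepA : ∀ ε : ℝ, 0 < ε → ∀ᶠ n in Filter.atTop, 1 - ε ≤ u n := by
    intro ε hε
    set m : ℝ := min ε 1 with hm
    have hm0 : 0 < m := lt_min hε one_pos
    have hm1 : m ≤ 1 := min_le_right _ _
    set c : ℝ := β ^ (1 - m/2 : ℝ) with hc
    have hexp0 : (0:ℝ) < 1 - m/2 := by linarith
    have hc1 : 1 < c := by
      rw [hc]
      exact Real.one_lt_rpow_iff_of_pos hb0 |>.mpr (Or.inl ⟨hβ, hexp0⟩)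
    have hcβ : c < β := by
      have h1 : (1 - m/2 : ℝ) < 1 := by linarith
      calc c = β ^ (1 - m/2 : ℝ) := hc
      _ < β ^ (1:ℝ) := Real.rpow_lt_rpow_of_exponent_lt hβ h1
      _ = β := Real.rpow_one β
    have hlogc : Real.log c = (1 - m/2) * Real.log β := by
      rw [hc, Real.log_rpow hb0]
    clear_value c
    have hA := eventually_len_le hβ hpar hc1 hcβ
    have htend : Filter.Tendsto (fun n : ℕ => (Real.log M / Real.log β) / (n:ℝ))
        Filter.atTop (𝓝 0) := tendsto_const_div_atTop_nhds_zero_nat _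
    have hB : ∀ᶠ n : ℕ in Filter.atTop, (Real.log M / Real.log β) / (n:ℝ) ≤ m/2 :=
      htend.eventually (eventually_le_nhds (by linarith))
    filter_upwards [hA, hB, Filter.eventually_ge_atTop 1] with n h1 h2 h3
    have hn0 : (0:ℝ) < (n:ℝ) := by exact_mod_cast h3
    have hlpos := len_pos hβ hpar h3
    have hcn : (0:ℝ) < c ^ n := by positivity
    have hlog1 : Real.log (rEnd β n - lEnd β n) ≤ Real.log (M * (c ^ n)⁻¹) :=
      (Real.log_le_log_iff hlpos (by positivity)).mpr h1
    have hlogcn : Real.log (c ^ n) = (n:ℝ) * Real.log c := by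
      rw [Real.log_pow]
    have hlog2 : Real.log (M * (c ^ n)⁻¹) = Real.log M - (n:ℝ) * Real.log c := by
      rw [Real.log_mul (ne_of_gt hMpos) (by positivity), Real.log_inv, hlogcn]
      ring
    have key : (n:ℝ) * Real.log c - Real.log M ≤ -(Real.log (rEnd β n - lEnd β n)) := by
      rw [hlog2] at hlog1
      linarith
    rw [hu_eq n]
    have hden : (0:ℝ) < (n:ℝ) * Real.log β := by positivity
    have step1 : ((n:ℝ) * Real.log c - Real.log M) / ((n:ℝ) * Real.log β)
        ≤ (-(Real.log (rEnd β n - lEnd β n))) / ((n:ℝ) * Real.log β) :=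
      (div_le_div_iff_of_pos_right hden).mpr key
    have step2 : ((n:ℝ) * Real.log c - Real.log M) / ((n:ℝ) * Real.log β)
        = (1 - m/2) - (Real.log M / Real.log β) / (n:ℝ) := by
      rw [hlogc]
      field_simp
    have : 1 - ε ≤ (1 - m/2) - (Real.log M / Real.log β) / (n:ℝ) := by
      have hmε : m ≤ ε := min_le_left _ _
      linarith
    linarith
  -- STEP B : frequent upper bound
  have stepB : ∀ ε : ℝ, 0 < ε → ∃ᶠ n in Filter.atTop, u n ≤ 1 + ε := by
    intro ε hε
    have hlo : Filter.Tendsto (fun x : ℝ => Real.log x / x) Filter.atTop (𝓝 0) :=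
      Real.isLittleO_log_id_atTop.tendsto_div_nhds_zero
    have hcomp : Filter.Tendsto (fun n : ℕ => (2:ℝ) * (n:ℝ)) Filter.atTop Filter.atTop :=
      Filter.Tendsto.const_mul_atTop two_pos tendsto_natCast_atTop_atTop
    have htend0 : Filter.Tendsto (fun n : ℕ => Real.log ((2:ℝ)*(n:ℝ)) / ((2:ℝ)*(n:ℝ)))
        Filter.atTop (𝓝 0) := hlo.comp hcomp
    have htend : Filter.Tendsto
        (fun n : ℕ => Real.log ((2:ℝ)*(n:ℝ)) / ((2:ℝ)*(n:ℝ)) * (2 / Real.log β))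
        Filter.atTop (𝓝 0) := by
      have := htend0.mul_const (2 / Real.log β)
      rwa [zero_mul] at this
    have hevB : ∀ᶠ n : ℕ in Filter.atTop,
        Real.log ((2:ℝ)*(n:ℝ)) / ((2:ℝ)*(n:ℝ)) * (2 / Real.log β) ≤ ε :=
      htend.eventually (eventually_le_nhds hε)
    rw [Filter.frequently_atTop]
    intro N
    obtain ⟨N₁, hN₁⟩ := Filter.eventually_atTop.mp hevB
    obtain ⟨n, hnge, hn1, hlen⟩ := freq_len_ge hβ hpar (max N N₁)
    refine ⟨n, le_trans (le_max_left N N₁) hnge, ?_⟩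
    have hn0 : (0:ℝ) < (n:ℝ) := by exact_mod_cast hn1
    have hspos : (0:ℝ) < (β ^ n)⁻¹ / (2*(n:ℝ)) := by positivity
    have hlog1 : Real.log ((β ^ n)⁻¹ / (2*(n:ℝ))) ≤ Real.log (rEnd β n - lEnd β n) :=
      (Real.log_le_log_iff hspos (by linarith)).mpr hlen
    have hlogbn : Real.log (β ^ n) = (n:ℝ) * Real.log β := by
      rw [Real.log_pow]
    have hlog2 : Real.log ((β ^ n)⁻¹ / (2*(n:ℝ)))
        = -((n:ℝ) * Real.log β) - Real.log ((2:ℝ)*(n:ℝ)) := by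
      rw [Real.log_div (by positivity) (by positivity), Real.log_inv, hlogbn]
    have key : -(Real.log (rEnd β n - lEnd β n)) ≤ (n:ℝ) * Real.log β + Real.log ((2:ℝ)*(n:ℝ)) := by
      rw [hlog2] at hlog1
      linarith
    rw [hu_eq n]
    have hden : (0:ℝ) < (n:ℝ) * Real.log β := by positivity
    have step1 : (-(Real.log (rEnd β n - lEnd β n))) / ((n:ℝ) * Real.log β)
        ≤ ((n:ℝ) * Real.log β + Real.log ((2:ℝ)*(n:ℝ))) / ((n:ℝ) * Real.log β) :=
      (div_le_div_iff_of_pos_right hden).mpr key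
    have step2 : ((n:ℝ) * Real.log β + Real.log ((2:ℝ)*(n:ℝ))) / ((n:ℝ) * Real.log β)
        = 1 + Real.log ((2:ℝ)*(n:ℝ)) / ((2:ℝ)*(n:ℝ)) * (2 / Real.log β) := by
      field_simp
    have h3 := hN₁ n (le_trans (le_max_right N N₁) hnge)
    rw [step2] at step1
    linarith
  -- assemble
  have hbddA : Filter.IsBoundedUnder (· ≥ ·) Filter.atTop u := by
    refine ⟨1 - 1, ?_⟩
    have := stepA 1 one_pos
    simpa [Filter.eventually_map] using this
  have hliminf_le : Filter.liminf u Filter.atTop ≤ 1 := by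
    by_contra h
    push_neg at h
    set ε := (Filter.liminf u Filter.atTop - 1)/2 with hεdef
    have hε : 0 < ε := by simp only [hεdef]; linarith
    have := Filter.liminf_le_of_frequently_le (stepB ε hε) hbddA
    simp only [hεdef] at this
    linarith
  have hle_liminf : 1 ≤ Filter.liminf u Filter.atTop := by
    have hcob : Filter.IsCoboundedUnder (· ≥ ·) Filter.atTop u :=
      Filter.IsCoboundedUnder.of_frequently_le (stepB 1 one_pos)
    by_contra h
    push_neg at h
    set ε := (1 - Filter.liminf u Filter.atTop)/2 with hεdef
    have hε : 0 < ε := by simp only [hεdef]; linarith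
    have := Filter.le_liminf_of_le hcob (stepA ε hε)
    simp only [hεdef] at this
    linarith
  linarith
end

section
/- For every β > 1, the upper density D̄(β) = limsup_{n→∞} (-log_β |I_n^P(β)|)/n satisfies D̄(β) ≤ 1 + τ(β), where τ(β) = limsup_{n→∞} (τ_n(β) - t_n(β))/n. -/
open Filter Topology

section AuxProof

section Basics

variable {b : ℝ} (hb : 1 < b)
include hb

omit hb in
lemma Tb_nonneg (x : ℝ) : 0 ≤ Tb b x := by
  have := Int.floor_le (b * x); rw [Tb]; linarith

omit hb in
lemma Tb_lt_one (x : ℝ) : Tb b x < 1 := by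
  have := Int.lt_floor_add_one (b * x); rw [Tb]; linarith

omit hb in

omit hb in
lemma T_iter_nonneg (m : ℕ) : 0 ≤ (Tb b)^[m] 1 := by
  cases m with
  | zero => norm_num
  | succ k =>
    rw [Function.iterate_succ_apply']
    exact Tb_nonneg _

omit hb in
lemma T_iter_lt_one {m : ℕ} (hm : 1 ≤ m) : (Tb b)^[m] 1 < 1 := by
  obtain ⟨k, rfl⟩ : ∃ k, m = k + 1 := ⟨m - 1, by omega⟩
  rw [Function.iterate_succ_apply']
  exact Tb_lt_one _

omit hb in
lemma T_iter_le_one (m : ℕ) : (Tb b)^[m] 1 ≤ 1 := by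
  cases m with
  | zero => norm_num
  | succ k => exact le_of_lt (T_iter_lt_one (Nat.succ_le_succ (Nat.zero_le k)))

attribute [local simp] Function.iterate_zero_apply

lemma bT_nonneg (i : ℕ) : 0 ≤ b * (Tb b)^[i] 1 :=
  mul_nonneg (le_of_lt (lt_trans one_pos hb)) (T_iter_nonneg i)

lemma digit_cast (i : ℕ) : ((digit b 1 i : ℕ) : ℝ) = (⌊b * (Tb b)^[i] 1⌋ : ℤ) := by
  have h0 : (0:ℤ) ≤ ⌊b * (Tb b)^[i] 1⌋ := Int.floor_nonneg.2 (bT_nonneg hb i)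
  rw [digit]
  exact_mod_cast congrArg (fun z : ℤ => (z : ℝ)) (Int.toNat_of_nonneg h0)

lemma digit_le (i : ℕ) : (digit b 1 i : ℝ) ≤ b * (Tb b)^[i] 1 := by
  rw [digit_cast hb]; exact Int.floor_le _

lemma lt_digit (i : ℕ) : b * (Tb b)^[i] 1 < (digit b 1 i : ℝ) + 1 := by
  rw [digit_cast hb]; exact Int.lt_floor_add_one _

lemma T_succ (i : ℕ) : (Tb b)^[i+1] 1 = b * (Tb b)^[i] 1 - (digit b 1 i : ℝ) := by
  rw [Function.iterate_succ_apply', Tb, digit_cast hb]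

lemma expand (k m : ℕ) :
    b ^ m * (Tb b)^[k] 1 =
      (∑ i ∈ Finset.range m, (digit b 1 (k + i) : ℝ) * b ^ (m - 1 - i)) + (Tb b)^[k + m] 1 := by
  induction m with
  | zero => simp
  | succ m ih =>
    have hsum : (∑ i ∈ Finset.range (m+1), (digit b 1 (k + i) : ℝ) * b ^ (m + 1 - 1 - i))
        = (∑ i ∈ Finset.range m, (digit b 1 (k + i) : ℝ) * b ^ (m - i)) + (digit b 1 (k + m) : ℝ) := by
      rw [Finset.sum_range_succ]
      simp only [Nat.add_sub_cancel, Nat.sub_self, pow_zero, mul_one]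
    rw [hsum]
    have hb0 : b ^ (m+1) * (Tb b)^[k] 1 = b * (b ^ m * (Tb b)^[k] 1) := by ring
    rw [hb0, ih, mul_add, Finset.mul_sum]
    have h1 : ∀ i ∈ Finset.range m, b * ((digit b 1 (k + i) : ℝ) * b ^ (m - 1 - i))
        = (digit b 1 (k + i) : ℝ) * b ^ (m - i) := by
      intro i hi
      simp only [Finset.mem_range] at hi
      have : m - i = (m - 1 - i) + 1 := by omega
      rw [this, pow_succ]; ring
    rw [Finset.sum_congr rfl h1]
    have h2 : b * (Tb b)^[k + m] 1 = (digit b 1 (k + m) : ℝ) + (Tb b)^[k + (m+1)] 1 := by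
      have := T_succ hb (k + m)
      rw [show k + (m+1) = (k + m) + 1 by ring, this]; ring
    rw [h2]; ring

lemma diff_eq (k m : ℕ) (h : ∀ i, i < m → digit b 1 (k + i) = digit b 1 i) :
    (Tb b)^[m] 1 - (Tb b)^[k + m] 1 = b ^ m * (1 - (Tb b)^[k] 1) := by
  have e1 := expand hb 0 m
  have e2 := expand hb k m
  simp only [Function.iterate_zero_apply, mul_one, zero_add] at e1
  have hsum : (∑ i ∈ Finset.range m, (digit b 1 (k + i) : ℝ) * b ^ (m - 1 - i))
      = (∑ i ∈ Finset.range m, (digit b 1 i : ℝ) * b ^ (m - 1 - i)) := by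
    apply Finset.sum_congr rfl
    intro i hi
    simp only [Finset.mem_range] at hi
    rw [h i hi]
  rw [hsum] at e2
  have : b ^ m * (1 - (Tb b)^[k] 1) = b ^ m - b ^ m * (Tb b)^[k] 1 := by ring
  rw [this]; linarith [e1, e2]

lemma adm (k m : ℕ) (hk : 1 ≤ k) (h : ∀ i, i < m → digit b 1 (k + i) = digit b 1 i) :
    digit b 1 (k + m) ≤ digit b 1 m := by
  have hd := diff_eq hb k m h
  have h1 : (Tb b)^[k] 1 < 1 := T_iter_lt_one hk
  have hbm : (0:ℝ) < b ^ m := pow_pos (lt_trans one_pos hb) m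
  have h2 : (Tb b)^[k + m] 1 ≤ (Tb b)^[m] 1 := by nlinarith
  have h3 : b * (Tb b)^[k + m] 1 ≤ b * (Tb b)^[m] 1 :=
    mul_le_mul_of_nonneg_left h2 (le_of_lt (lt_trans one_pos hb))
  have h4 : (⌊b * (Tb b)^[k + m] 1⌋ : ℤ) ≤ ⌊b * (Tb b)^[m] 1⌋ := Int.floor_le_floor h3
  simp only [digit]
  exact Int.toNat_le_toNat h4

lemma step_ineq (k p : ℕ) (hk : 1 ≤ k) (h : ∀ i, i < p → digit b 1 (k + i) = digit b 1 i)
    (hp : digit b 1 (k + p) < digit b 1 p) :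
    1 - (Tb b)^[k + p + 1] 1 ≤ b ^ (p+1) * (1 - (Tb b)^[k] 1) := by
  have e1 := expand hb 0 (p+1)
  have e2 := expand hb k (p+1)
  simp only [Function.iterate_zero_apply, mul_one, zero_add] at e1
  rw [Finset.sum_range_succ] at e1 e2
  have hsum : (∑ i ∈ Finset.range p, (digit b 1 (k + i) : ℝ) * b ^ (p + 1 - 1 - i))
      = (∑ i ∈ Finset.range p, (digit b 1 i : ℝ) * b ^ (p + 1 - 1 - i)) := by
    apply Finset.sum_congr rfl
    intro i hi
    simp only [Finset.mem_range] at hi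
    rw [h i hi]
  rw [hsum] at e2
  have hdig : (digit b 1 (k + p) : ℝ) + 1 ≤ (digit b 1 p : ℝ) := by
    exact_mod_cast Nat.succ_le_of_lt hp
  have hT1 : 0 ≤ (Tb b)^[p + 1] 1 := T_iter_nonneg p.succ
  have hkp : k + (p+1) = k + p + 1 := by ring
  rw [hkp] at e2
  have hexp : p + 1 - 1 - p = 0 := by omega
  rw [hexp, pow_zero, mul_one] at e1 e2
  nlinarith [e1, e2]

omit hb in
lemma T_zero_forward (k : ℕ) (h : (Tb b)^[k] 1 = 0) : ∀ i, (Tb b)^[k + i] 1 = 0 := by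
  intro i
  induction i with
  | zero => simpa using h
  | succ j ih =>
    rw [show k + (j+1) = (k+j) + 1 by ring, Function.iterate_succ_apply', ih]
    simp [Tb]

omit hb in
lemma digit_zero_forward (k : ℕ) (h : (Tb b)^[k] 1 = 0) : ∀ i, digit b 1 (k + i) = 0 := by
  intro i
  have := T_zero_forward k h i
  simp [digit, this]

lemma T_eq_zero_of_digits_zero (k : ℕ) (hk : 1 ≤ k) (h : ∀ i, digit b 1 (k + i) = 0) :
    (Tb b)^[k] 1 = 0 := by
  by_contra hT
  have h0 : 0 < (Tb b)^[k] 1 := lt_of_le_of_ne (T_iter_nonneg k) (Ne.symm hT)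
  obtain ⟨m, hm⟩ := pow_unbounded_of_one_lt (1 / (Tb b)^[k] 1) hb
  have hexp := expand hb k m
  have hsum : (∑ i ∈ Finset.range m, (digit b 1 (k + i) : ℝ) * b ^ (m - 1 - i)) = 0 := by
    apply Finset.sum_eq_zero
    intro i _
    rw [h i]; simp
  rw [hsum, zero_add] at hexp
  have h1 : (Tb b)^[k + m] 1 < 1 := T_iter_lt_one (le_trans hk (Nat.le_add_right k m))
  have h2 : 1 < b ^ m * (Tb b)^[k] 1 := by
    rw [div_lt_iff₀ h0] at hm
    linarith
  linarith [hexp ▸ h2]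

lemma not_forall_period (k : ℕ) (hk : 1 ≤ k) :
    ¬(∀ j, digit b 1 (k + j) = digit b 1 j) := by
  intro h
  have h1 : (Tb b)^[k] 1 < 1 := T_iter_lt_one hk
  have h2 : 0 < 1 - (Tb b)^[k] 1 := by linarith
  obtain ⟨m, hm⟩ := pow_unbounded_of_one_lt (1 / (1 - (Tb b)^[k] 1)) hb
  have hd := diff_eq hb k m (fun i _ => h i)
  have h3 : 1 < b ^ m * (1 - (Tb b)^[k] 1) := by
    rw [div_lt_iff₀ h2] at hm
    linarith
  have h4 : (Tb b)^[m] 1 ≤ 1 := T_iter_le_one m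
  have h5 : 0 ≤ (Tb b)^[k + m] 1 := T_iter_nonneg _
  linarith [hd ▸ h3]

end Basics
section PartA

def per (β : ℝ) (k n : ℕ) : Prop := ∀ j, j < n - k → digit β 1 (k + j) = digit β 1 j

lemma tauN_eq (β : ℝ) (n : ℕ) :
    tauN β n = sInf ({k | 1 ≤ k ∧ k < n ∧ per β k n} ∪ {n}) := by
  unfold tauN tau
  congr 1
  ext k
  simp only [Set.mem_union, Set.mem_setOf_eq, Set.mem_singleton_iff]
  constructor
  · rintro (⟨h1, h2, h3⟩ | h)
    · refine Or.inl ⟨h1, h2, fun j hj => ?_⟩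
      have hkj : k + j < n := by omega
      have hjn : j < n := by omega
      have := h3 j hj
      simpa [pad, prefixW, hkj, hjn] using this
    · exact Or.inr h
  · rintro (⟨h1, h2, h3⟩ | h)
    · refine Or.inl ⟨h1, h2, fun j hj => ?_⟩
      have hkj : k + j < n := by omega
      have hjn : j < n := by omega
      simpa [pad, prefixW, hkj, hjn] using h3 j hj
    · exact Or.inr h

lemma tauN_le (β : ℝ) (n : ℕ) : tauN β n ≤ n := by
  rw [tauN_eq]; exact Nat.sInf_le (Or.inr rfl)

lemma tauN_mem (β : ℝ) (n : ℕ) :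
    tauN β n = n ∨ (1 ≤ tauN β n ∧ tauN β n < n ∧ per β (tauN β n) n) := by
  have h : tauN β n ∈ ({k | 1 ≤ k ∧ k < n ∧ per β k n} ∪ {n} : Set ℕ) := by
    rw [tauN_eq]
    exact Nat.sInf_mem ⟨n, Or.inr rfl⟩
  rcases h with h | h
  · exact Or.inr h
  · exact Or.inl h

lemma tauN_pos (β : ℝ) {n : ℕ} (hn : 1 ≤ n) : 1 ≤ tauN β n := by
  rcases tauN_mem β n with h | ⟨h1, _, _⟩
  · omega
  · exact h1

lemma tauN_le_of (β : ℝ) {k n : ℕ} (h1 : 1 ≤ k) (h2 : k < n) (h3 : per β k n) :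
    tauN β n ≤ k := by
  rw [tauN_eq]; exact Nat.sInf_le (Or.inl ⟨h1, h2, h3⟩)

lemma digit_mod (β : ℝ) {τ n : ℕ} (hτ : 1 ≤ τ) (hper : per β τ n) :
    ∀ x, x < n → digit β 1 x = digit β 1 (x % τ) := by
  intro x
  induction x using Nat.strong_induction_on with
  | _ x ih =>
    intro hx
    by_cases hxτ : x < τ
    · rw [Nat.mod_eq_of_lt hxτ]
    · have hx2 : τ ≤ x := le_of_not_gt hxτ
      have e1 : digit β 1 (τ + (x - τ)) = digit β 1 (x - τ) := hper _ (by omega)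
      rw [show τ + (x - τ) = x by omega] at e1
      rw [e1, ih (x - τ) (by omega) (by omega), Nat.mod_eq_sub_mod hx2]

variable {β : ℝ} (hβ : 1 < β)
include hβ

lemma tau_jump (n : ℕ) (hn : 1 ≤ n) :
    tauN β (n+1) = tauN β n ∨ tauN β (n+1) = n + 1 := by
  by_contra hcon
  push_neg at hcon
  obtain ⟨hne, hne2⟩ := hcon
  rcases tauN_mem β (n+1) with h | ⟨hj1, hj2, hjper⟩
  · exact hne2 h
  set j := tauN β (n+1) with hjdef
  set τ := tauN β n with hτdef
  have hjn : j ≤ n := by omega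
  have hτj : τ ≤ j := by
    rcases eq_or_lt_of_le hjn with h | h
    · rw [h]; exact tauN_le β n
    · exact tauN_le_of β hj1 h (fun i hi => hjper i (by omega))
  have hτltj : τ < j := lt_of_le_of_ne hτj (Ne.symm hne)
  have hτn : τ < n := lt_of_lt_of_le hτltj hjn
  have hτ1 : 1 ≤ τ := tauN_pos β hn
  have hτper : per β τ n := by
    rcases tauN_mem β n with h | ⟨_, _, hp⟩
    · omega
    · exact hp
  have hbreak : digit β 1 n ≠ digit β 1 (n - τ) := by
    intro heq
    have hpτ : per β τ (n+1) := by
      intro i hi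
      rcases Nat.lt_or_ge i (n - τ) with h | h
      · exact hτper i h
      · have : i = n - τ := by omega
        rw [this, show τ + (n - τ) = n by omega]
        exact heq
    have := tauN_le_of β hτ1 (by omega) hpτ
    omega
  have hdn : digit β 1 n = digit β 1 (n - j) := by
    have := hjper (n - j) (by omega)
    rw [show j + (n - j) = n by omega] at this
    exact this
  rcases le_or_gt j (n - τ) with hcase | hcase
  · have a1 : digit β 1 (n - j) = digit β 1 (n - j - τ) := by
      have := hτper (n - j - τ) (by omega)
      rw [show τ + (n - j - τ) = n - j by omega] at this
      exact this
    have a2 : digit β 1 (n - τ) = digit β 1 (n - τ - j) := by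
      have := hjper (n - τ - j) (by omega)
      rw [show j + (n - τ - j) = n - τ by omega] at this
      exact this
    have heq : n - j - τ = n - τ - j := by omega
    exact hbreak (by rw [hdn, a1, heq, ← a2])
  · have hadm : digit β 1 n ≤ digit β 1 (n - τ) := by
      have := adm hβ τ (n - τ) hτ1 (fun i hi => hτper i hi)
      rw [show τ + (n - τ) = n by omega] at this
      exact this
    have hlt : digit β 1 n < digit β 1 (n - τ) := lt_of_le_of_ne hadm hbreak
    have hjτ1 : τ + 1 ≤ j := hτltj
    have hrise : digit β 1 (n - τ) = digit β 1 (n % τ) := by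
      rw [digit_mod β hτ1 hτper (n - τ) (by omega), Nat.mod_eq_sub_mod (by omega : τ ≤ n)]
    set q := if j % τ = 0 then τ else j % τ with hq
    have hq1 : 1 ≤ q := by
      by_cases h : j % τ = 0 <;> simp [hq, h] <;> omega
    have hqτ : q ≤ τ := by
      have := Nat.mod_lt j (show 0 < τ by omega)
      by_cases h : j % τ = 0 <;> simp [hq, h] <;> omega
    have hqmod : q % τ = j % τ := by
      by_cases h : j % τ = 0
      · simp [hq, h, Nat.mod_self]
      · simp [hq, h]
    have hclaim1 : ∀ i, i < n - j → digit β 1 (q + i) = digit β 1 i := by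
      intro i hi
      have hqin : q + i < n := by omega
      have hjin : j + i < n := by omega
      have e1 := digit_mod β hτ1 hτper (q + i) hqin
      have e2 := digit_mod β hτ1 hτper (j + i) hjin
      have e3 : (q + i) % τ = (j + i) % τ := by
        rw [Nat.add_mod, hqmod, ← Nat.add_mod]
      have e4 : digit β 1 (j + i) = digit β 1 i := hjper i (by omega)
      rw [e1, e3, ← e2, e4]
    have hclaim2 : digit β 1 (q + (n - j)) = digit β 1 (n % τ) := by
      have hqLn : q + (n - j) < n := by omega
      rw [digit_mod β hτ1 hτper (q + (n - j)) hqLn]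
      congr 1
      have e3 : (q + (n - j)) % τ = (j + (n - j)) % τ := by
        rw [Nat.add_mod, hqmod, ← Nat.add_mod]
      rw [e3, show j + (n - j) = n by omega]
    have hadm2 : digit β 1 (q + (n - j)) ≤ digit β 1 (n - j) := adm hβ q (n - j) hq1 hclaim1
    rw [hclaim2] at hadm2
    rw [← hdn] at hadm2
    rw [hrise] at hlt
    omega

lemma tau_eventually_const {N : ℕ} (hN : 1 ≤ N) (h : ∀ n, N ≤ n → tauN β n ≠ n) :
    False := by
  have hconst : ∀ n, N ≤ n → tauN β n = tauN β N := by
    intro n hn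
    induction n with
    | zero => omega
    | succ m ih =>
      rcases Nat.lt_or_ge m N with hm | hm
      · have : N = m + 1 := by omega
        rw [this]
      · have hm1 : 1 ≤ m := by omega
        rcases tau_jump hβ m hm1 with h1 | h1
        · rw [h1, ih hm]
        · exact absurd h1 (h (m+1) (by omega))
  set k := tauN β N with hk
  have hk1 : 1 ≤ k := tauN_pos β hN
  have hkN : k < N := lt_of_le_of_ne (tauN_le β N) (h N le_rfl)
  have hper : ∀ i, digit β 1 (k + i) = digit β 1 i := by
    intro i
    set n := N + k + i + 1 with hn
    have h1 : tauN β n = k := by rw [hconst n (by omega)]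
    rcases tauN_mem β n with h2 | ⟨_, _, hp⟩
    · omega
    · rw [h1] at hp
      exact hp i (by omega)
  exact not_forall_period hβ k hk1 hper

lemma freq_tau_eq : ∀ N : ℕ, ∃ n, N ≤ n ∧ tauN β n = n := by
  intro N
  by_contra hcon
  push_neg at hcon
  exact tau_eventually_const hβ (show 1 ≤ N + 1 by omega)
    (fun n hn => hcon n (by omega)) 

end PartA
section PartB

noncomputable def Fp (β : ℝ) : ℕ → ℝ → ℝ
  | 0 => fun _ => 1
  | (k+1) => fun x => x * Fp β k x - (digit β 1 k : ℝ)

lemma Fp_cont (β : ℝ) (k : ℕ) : Continuous (Fp β k) := by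
  induction k with
  | zero => simpa [Fp] using continuous_const
  | succ k ih =>
    have : Continuous fun x => x * Fp β k x - (digit β 1 k : ℝ) :=
      (continuous_id.mul ih).sub continuous_const
    simpa [Fp] using this

variable {β : ℝ} {n : ℕ}

lemma beta_mem (hβ : 1 < β) : β ∈ cylP n (prefixW β n) := ⟨hβ, fun _ => rfl⟩

lemma mem_digit {γ : ℝ} (hγ : γ ∈ cylP n (prefixW β n)) {k : ℕ} (hk : k < n) :
    digit γ 1 k = digit β 1 k := hγ.2 ⟨k, hk⟩

lemma Fp_eq_T {γ : ℝ} (hγ : γ ∈ cylP n (prefixW β n)) :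
    ∀ k, k ≤ n → Fp β k γ = (Tb γ)^[k] 1 := by
  intro k
  induction k with
  | zero => intro _; simp [Fp]
  | succ k ih =>
    intro hk
    have h1 := ih (by omega)
    have h2 := T_succ hγ.1 k
    rw [mem_digit hγ (show k < n by omega)] at h2
    simp only [Fp]
    rw [h1, h2]

lemma Fp_mem_Ico {γ : ℝ} (hγ : γ ∈ cylP n (prefixW β n)) {k : ℕ} (h1 : 1 ≤ k) (h2 : k ≤ n) :
    Fp β k γ ∈ Set.Ico (0:ℝ) 1 := by
  rw [Fp_eq_T hγ k h2]
  exact ⟨T_iter_nonneg k, T_iter_lt_one h1⟩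

lemma cyl_bddBelow : BddBelow (cylP n (prefixW β n)) :=
  ⟨1, fun γ hγ => le_of_lt hγ.1⟩

lemma mem_lt_upper {γ : ℝ} (hn : 1 ≤ n) (hγ : γ ∈ cylP n (prefixW β n)) :
    γ < (digit β 1 0 : ℝ) + 1 := by
  have h1 := lt_digit hγ.1 0
  rw [mem_digit hγ (show 0 < n by omega)] at h1
  simpa using h1

lemma mem_ge_lower {γ : ℝ} (hn : 1 ≤ n) (hγ : γ ∈ cylP n (prefixW β n)) :
    (digit β 1 0 : ℝ) ≤ γ := by
  have h1 := digit_le hγ.1 0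
  rw [mem_digit hγ (show 0 < n by omega)] at h1
  simpa using h1

lemma cyl_bddAbove (hn : 1 ≤ n) : BddAbove (cylP n (prefixW β n)) :=
  ⟨(digit β 1 0 : ℝ) + 1, fun γ hγ => le_of_lt (mem_lt_upper hn hγ)⟩

lemma mem_of_Fp {x : ℝ} (hx1 : 1 < x)
    (h : ∀ k, 1 ≤ k → k ≤ n → Fp β k x ∈ Set.Ico (0:ℝ) 1) :
    x ∈ cylP n (prefixW β n) := by
  have main : ∀ k, k ≤ n →
      ((Tb x)^[k] 1 = Fp β k x ∧ ∀ i, i < k → digit x 1 i = digit β 1 i) := by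
    intro k
    induction k with
    | zero => intro _; exact ⟨by simp [Fp], fun i hi => absurd hi (by omega)⟩
    | succ k ih =>
      intro hk
      obtain ⟨hT, hdig⟩ := ih (by omega)
      have hmem := h (k+1) (by omega) hk
      have hfloor : ⌊x * (Tb x)^[k] 1⌋ = (digit β 1 k : ℤ) := by
        rw [Int.floor_eq_iff]
        constructor
        · have : (0:ℝ) ≤ Fp β (k+1) x := hmem.1
          simp only [Fp] at this
          rw [hT]
          push_cast
          linarith
        · have : Fp β (k+1) x < 1 := hmem.2
          simp only [Fp] at this
          rw [hT]
          push_cast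
          linarith
      have hdk : digit x 1 k = digit β 1 k := by
        rw [digit, hfloor]
        exact Int.toNat_natCast _
      refine ⟨?_, ?_⟩
      · have h2 := T_succ hx1 k
        rw [hdk] at h2
        simp only [Fp]
        rw [h2, hT]
      · intro i hi
        rcases Nat.lt_or_ge i k with h' | h'
        · exact hdig i h'
        · have : i = k := by omega
          rw [this]; exact hdk
  exact ⟨hx1, fun i => (main n le_rfl).2 i i.isLt⟩

end PartB
section PartB2

lemma digit0_pos {b : ℝ} (hb : 1 < b) : 1 ≤ digit b 1 0 := by
  have hfl : (1:ℤ) ≤ ⌊b * 1⌋ := Int.le_floor.2 (by simpa using le_of_lt hb)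
  have : (1:ℤ).toNat ≤ (⌊b * 1⌋).toNat := Int.toNat_le_toNat hfl
  simpa [digit] using this

lemma Titer_le {b : ℝ} (hb : 1 < b) : ∀ j, 1 ≤ j → (Tb b)^[j] 1 ≤ b^(j-1) * (b-1) := by
  intro j
  induction j with
  | zero => intro h; omega
  | succ k ih =>
    intro _
    rcases Nat.eq_zero_or_pos k with h | h
    · subst h
      have h2 := T_succ hb 0
      simp only [Function.iterate_zero_apply, mul_one] at h2
      have hd' : (1:ℝ) ≤ (digit b 1 0 : ℝ) := by exact_mod_cast digit0_pos hb
      have he : (0+1) - 1 = 0 := rfl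
      rw [he, pow_zero, one_mul, h2]
      linarith
    · have hk := ih h
      have h2 := T_succ hb k
      have hd : (0:ℝ) ≤ (digit b 1 k : ℝ) := Nat.cast_nonneg _
      have hb0 : (0:ℝ) < b := lt_trans one_pos hb
      have h3 : (Tb b)^[k+1] 1 ≤ b * (Tb b)^[k] 1 := by rw [h2]; linarith
      have h4 : b * (Tb b)^[k] 1 ≤ b * (b^(k-1) * (b-1)) :=
        mul_le_mul_of_nonneg_left hk (le_of_lt hb0)
      have h5 : b * (b^(k-1) * (b-1)) = b^k * (b-1) := by
        rw [← mul_assoc, ← pow_succ']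
        congr 2
        omega
      have h6 : (k + 1) - 1 = k := by omega
      rw [h6]
      linarith

lemma exists_xi {β : ℝ} (hβ : 1 < β) :
    ∃ ξ : ℝ, 1 < ξ ∧ ξ ≤ β ∧ ∃ N₁ : ℕ, 1 ≤ N₁ ∧
      ∀ n γ, N₁ ≤ n → γ ∈ cylP n (prefixW β n) → ξ ≤ γ := by
  have hmk : ∀ ξ₀ : ℝ, 1 < ξ₀ → (∃ N₁ : ℕ, 1 ≤ N₁ ∧
      ∀ n γ, N₁ ≤ n → γ ∈ cylP n (prefixW β n) → ξ₀ ≤ γ) →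
      ∃ ξ : ℝ, 1 < ξ ∧ ξ ≤ β ∧ ∃ N₁ : ℕ, 1 ≤ N₁ ∧
      ∀ n γ, N₁ ≤ n → γ ∈ cylP n (prefixW β n) → ξ ≤ γ := by
    intro ξ₀ hξ₀ ⟨N₁, hN₁, h⟩
    refine ⟨min ξ₀ β, ?_, min_le_right _ _, N₁, hN₁, fun n γ hn hγ => ?_⟩
    · exact lt_min hξ₀ hβ
    · exact le_trans (min_le_left _ _) (h n γ hn hγ)
  rcases Nat.lt_or_ge (digit β 1 0) 2 with h2 | h2
  · have he0 : digit β 1 0 = 1 := by have := digit0_pos hβ; omega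
    have hex : ∃ j0, digit β 1 (1 + j0) ≠ 0 := by
      by_contra hcon
      push_neg at hcon
      have hT := T_eq_zero_of_digits_zero hβ 1 le_rfl hcon
      have hfl : ⌊β * 1⌋ = 1 := by
        have h0 : (0:ℤ) ≤ ⌊β * 1⌋ := Int.floor_nonneg.2 (by linarith)
        have h1 : (⌊β * 1⌋).toNat = 1 := by simpa [digit] using he0
        omega
      have h3 : (Tb β)^[1] 1 = β - 1 := by
        have h4 : (Tb β)^[1] 1 = β * 1 - (⌊β * 1⌋ : ℤ) := by simp [Tb]
        rw [h4, hfl]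
        norm_num
      rw [h3] at hT
      linarith
    obtain ⟨j0, hj0⟩ := hex
    apply hmk (1 + 1/(2*(β+1)^(1+j0)))
      (by have : (0:ℝ) < 1/(2*(β+1)^(1+j0)) := by positivity
          linarith)
    refine ⟨(1+j0)+1, by omega, ?_⟩
    set j := 1 + j0 with hjdef
    intro n γ hn hγ
    have hγ1 : 1 < γ := hγ.1
    have hγ0 : (0:ℝ) < γ := by linarith
    have hd : 1 ≤ digit γ 1 j := by
      rw [mem_digit hγ (show j < n by omega)]; omega
    have h1 : 1 ≤ γ * (Tb γ)^[j] 1 := by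
      have hdl := digit_le hγ1 j
      have hc : (1:ℝ) ≤ (digit γ 1 j : ℝ) := by exact_mod_cast hd
      linarith
    have hT := Titer_le hγ1 j (by omega)
    have hmain : 1 ≤ γ^j * (γ - 1) := by
      have h4 : γ * (Tb γ)^[j] 1 ≤ γ * (γ^(j-1)*(γ-1)) :=
        mul_le_mul_of_nonneg_left hT (le_of_lt hγ0)
      have h5 : γ * (γ^(j-1) * (γ-1)) = γ^j * (γ-1) := by
        rw [← mul_assoc, ← pow_succ']
        congr 2
        omega
      linarith [h5 ▸ h4]
    by_contra hcon
    push_neg at hcon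
    have hb1 : (0:ℝ) < (β+1)^j := by positivity
    have hβ1 : (1:ℝ) ≤ β + 1 := by linarith
    have hc1 : 1/(2*(β+1)^j) ≤ 1 := by
      rw [div_le_one (by positivity)]
      have hone : (1:ℝ) ≤ (β+1)^j := one_le_pow₀ hβ1
      linarith
    have hγβ : γ ≤ β + 1 := by
      have : γ < 1 + 1/(2*(β+1)^j) := hcon
      linarith
    have hpow2 : γ^j ≤ (β+1)^j := pow_le_pow_left₀ (by linarith) hγβ j
    have hlast : γ^j * (γ - 1) < (β+1)^j * (1/(2*(β+1)^j)) :=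
      mul_lt_mul' hpow2 (by linarith) (by linarith) (by positivity)
    have heq : (β+1)^j * (1/(2*(β+1)^j)) = 1/2 := by field_simp
    rw [heq] at hlast
    linarith
  · apply hmk 2 one_lt_two
    refine ⟨1, le_rfl, fun n γ hn hγ => ?_⟩
    have hge := mem_ge_lower (show 1 ≤ n by omega) hγ
    have hc : (2:ℝ) ≤ (digit β 1 0 : ℝ) := by exact_mod_cast h2
    linarith

lemma chain {b : ℝ} (hb : 1 < b) {M : ℕ} (hM1 : 1 ≤ M)
    (hLd : digit b 1 (M-1) ≠ 0) (hz : ∀ x, M - 1 < x → digit b 1 x = 0) :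
    ∀ k, 1 ≤ k → k ≤ M → b^k ≤ b^(2*M) * (1 - (Tb b)^[k] 1) := by
  have hTM : (Tb b)^[M] 1 = 0 :=
    T_eq_zero_of_digits_zero hb M hM1 (fun i => hz (M+i) (by omega))
  have hTz : ∀ m, M ≤ m → (Tb b)^[m] 1 = 0 := by
    intro m hm
    have := T_zero_forward M hTM (m - M)
    rwa [show M + (m-M) = m by omega] at this
  suffices H : ∀ d k, 1 ≤ k → k ≤ M → M - k ≤ d → b^k ≤ b^(2*M) * (1 - (Tb b)^[k] 1) by
    intro k h1 h2
    exact H M k h1 h2 (by omega)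
  intro d
  induction d with
  | zero =>
    intro k h1 h2 h3
    have hk : k = M := by omega
    rw [hk, hTM, sub_zero, mul_one]
    exact pow_le_pow_right₀ (le_of_lt hb) (by omega)
  | succ d ih =>
    intro k h1 h2 h3
    by_cases hT0 : (Tb b)^[k] 1 = 0
    · rw [hT0, sub_zero, mul_one]
      exact pow_le_pow_right₀ (le_of_lt hb) (by omega)
    · have hkM : k < M := by
        rcases eq_or_lt_of_le h2 with h | h
        · exact absurd (h ▸ hTM) hT0
        · exact h
      have hne : ∃ p, digit b 1 (k + p) ≠ digit b 1 p := by
        refine ⟨M-1, ?_⟩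
        rw [hz (k + (M-1)) (by omega)]
        exact fun h => hLd h.symm
      set p := Nat.find hne with hpdef
      have hspec : digit b 1 (k + p) ≠ digit b 1 p := Nat.find_spec hne
      have hmin : ∀ i, i < p → digit b 1 (k + i) = digit b 1 i := fun i hi =>
        not_not.1 (Nat.find_min hne hi)
      have hpM : p ≤ M - 1 := by
        apply Nat.find_min' hne
        rw [hz (k + (M-1)) (by omega)]
        exact fun h => hLd h.symm
      have hlt : digit b 1 (k + p) < digit b 1 p :=
        lt_of_le_of_ne (adm hb k p h1 hmin) hspec
      have hstep := step_ineq hb k p h1 hmin hlt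
      have hbpos : (0:ℝ) < b := lt_trans one_pos hb
      rcases le_or_gt (k + p + 1) M with hk2 | hk2
      · have hIH := ih (k+p+1) (by omega) hk2 (by omega)
        have h4 : b^(2*M) * (1 - (Tb b)^[k+p+1] 1) ≤ b^(2*M) * (b^(p+1) * (1 - (Tb b)^[k] 1)) :=
          mul_le_mul_of_nonneg_left hstep (by positivity)
        have h5 : b^(p+1) * b^k ≤ b^(p+1) * (b^(2*M) * (1 - (Tb b)^[k] 1)) := by
          have heq : b^(p+1) * b^k = b^(k+p+1) := by
            rw [← pow_add]
            congr 1
            omega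
          calc b^(p+1)*b^k = b^(k+p+1) := heq
            _ ≤ b^(2*M) * (1 - (Tb b)^[k+p+1] 1) := hIH
            _ ≤ b^(2*M) * (b^(p+1) * (1 - (Tb b)^[k] 1)) := h4
            _ = b^(p+1) * (b^(2*M) * (1 - (Tb b)^[k] 1)) := by ring
        exact le_of_mul_le_mul_left h5 (by positivity)
      · have hT2 : (Tb b)^[k+p+1] 1 = 0 := hTz _ (by omega)
        rw [hT2, sub_zero] at hstep
        have hsplit : b^(2*M) = b^(2*M - (p+1)) * b^(p+1) := by
          rw [← pow_add]
          congr 1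
          omega
        calc b^k ≤ b^(2*M-(p+1)) := pow_le_pow_right₀ (le_of_lt hb) (by omega)
          _ ≤ b^(2*M-(p+1)) * (b^(p+1) * (1 - (Tb b)^[k] 1)) :=
              le_mul_of_one_le_right (by positivity) hstep
          _ = b^(2*M) * (1 - (Tb b)^[k] 1) := by rw [hsplit]; ring

end PartB2
section PartB3

lemma geom_pos {R : ℝ} (hR : 0 ≤ R) (k : ℕ) : 0 ≤ ∑ i ∈ Finset.range k, R^i :=
  Finset.sum_nonneg fun i _ => pow_nonneg hR i

lemma geom_succ (R : ℝ) (k : ℕ) :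
    ∑ i ∈ Finset.range (k+1), R^i = 1 + R * ∑ i ∈ Finset.range k, R^i := by
  rw [Finset.sum_range_succ']
  simp only [pow_zero, pow_succ]
  rw [← Finset.sum_mul]
  ring

lemma pow_le_one_add {t : ℝ} (ht : 0 ≤ t) :
    ∀ k : ℕ, 2*(k:ℝ)*t ≤ 1 → (1+t)^k ≤ 1 + 2*(k:ℝ)*t := by
  intro k
  induction k with
  | zero => simp
  | succ k ih =>
    intro h
    have hcast : ((k+1 : ℕ):ℝ) = (k:ℝ) + 1 := by push_cast; ring
    rw [hcast] at h ⊢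
    have hk : 2*(k:ℝ)*t ≤ 1 := by nlinarith
    have h1 := ih hk
    have h2 : (1+t)^(k+1) = (1+t)^k * (1+t) := pow_succ _ _
    have h3 : (1+t)^k * (1+t) ≤ (1 + 2*(k:ℝ)*t)*(1+t) :=
      mul_le_mul_of_nonneg_right h1 (by linarith)
    rw [h2]
    nlinarith

variable {β : ℝ} {n : ℕ}

lemma cyl_interval {γ : ℝ} (hγC : γ ∈ cylP n (prefixW β n)) {Δ : ℝ} (hΔ : 0 < Δ)
    (hcond : ∀ k, 1 ≤ k → k ≤ n → Δ * (∑ i ∈ Finset.range k, (γ+Δ)^i) < 1 - Fp β k γ) :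
    ∀ x, γ ≤ x → x < γ + Δ → x ∈ cylP n (prefixW β n) := by
  intro x hx1 hx2
  have hγ1 : 1 < γ := hγC.1
  have hγ0 : (0:ℝ) < γ := by linarith
  have hx1' : 1 < x := lt_of_lt_of_le hγ1 hx1
  have hR0 : (0:ℝ) ≤ γ + Δ := by linarith
  have main : ∀ k, k ≤ n →
      ((0 ≤ (Tb x)^[k] 1 - Fp β k γ ∧
        (Tb x)^[k] 1 - Fp β k γ ≤ (x - γ) * ∑ i ∈ Finset.range k, (γ+Δ)^i) ∧
       ∀ i, i < k → digit x 1 i = digit β 1 i) := by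
    intro k
    induction k with
    | zero =>
      intro _
      refine ⟨⟨?_, ?_⟩, fun i hi => absurd hi (by omega)⟩ <;> simp [Fp]
    | succ k ih =>
      intro hk
      obtain ⟨⟨hd0, hd1⟩, hdig⟩ := ih (by omega)
      have hFT : Fp β k γ = (Tb γ)^[k] 1 := Fp_eq_T hγC k (by omega)
      have hF0 : 0 ≤ Fp β k γ := by rw [hFT]; exact T_iter_nonneg k
      have hF1 : Fp β k γ ≤ 1 := by rw [hFT]; exact T_iter_le_one k
      have hγd : digit γ 1 k = digit β 1 k := mem_digit hγC (by omega)
      have hγlow : (digit β 1 k : ℝ) ≤ γ * Fp β k γ := by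
        rw [hFT, ← hγd]
        exact digit_le hγ1 k
      have hTx0 : 0 ≤ (Tb x)^[k] 1 := T_iter_nonneg k
      have hlow : γ * Fp β k γ ≤ x * (Tb x)^[k] 1 :=
        mul_le_mul hx1 (by linarith) hF0 (by linarith)
      have hup : x * (Tb x)^[k] 1 - γ * Fp β k γ
          ≤ (x - γ) * ∑ i ∈ Finset.range (k+1), (γ+Δ)^i := by
        have e2 : x * ((Tb x)^[k] 1 - Fp β k γ)
            ≤ (γ+Δ) * ((x - γ) * ∑ i ∈ Finset.range k, (γ+Δ)^i) :=
          mul_le_mul (by linarith) hd1 hd0 hR0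
        have e3 : (x - γ) * Fp β k γ ≤ (x - γ) * 1 :=
          mul_le_mul_of_nonneg_left hF1 (by linarith)
        rw [geom_succ]
        nlinarith [e2, e3]
      have hcnd := hcond (k+1) (by omega) hk
      have hupd : x * (Tb x)^[k] 1 < (digit β 1 k : ℝ) + 1 := by
        have e4 : γ * Fp β k γ = (digit β 1 k : ℝ) + Fp β (k+1) γ := by
          simp only [Fp]; ring
        have e5 : (x - γ) * ∑ i ∈ Finset.range (k+1), (γ+Δ)^i
            ≤ Δ * ∑ i ∈ Finset.range (k+1), (γ+Δ)^i :=
          mul_le_mul_of_nonneg_right (by linarith) (geom_pos hR0 _)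
        linarith
      have hfloor : ⌊x * (Tb x)^[k] 1⌋ = (digit β 1 k : ℤ) := by
        rw [Int.floor_eq_iff]
        constructor
        · push_cast; linarith
        · push_cast; linarith
      have hdk : digit x 1 k = digit β 1 k := by
        rw [digit, hfloor]
        exact Int.toNat_natCast _
      have hx_succ : (Tb x)^[k+1] 1 = x * (Tb x)^[k] 1 - (digit β 1 k : ℝ) := by
        rw [T_succ hx1' k, hdk]
      have hFpsucc : Fp β (k+1) γ = γ * Fp β k γ - (digit β 1 k : ℝ) := by
        simp only [Fp]
      refine ⟨⟨?_, ?_⟩, ?_⟩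
      · rw [hx_succ, hFpsucc]
        linarith
      · rw [hx_succ, hFpsucc]
        linarith
      · intro i hi
        rcases Nat.lt_or_ge i k with h' | h'
        · exact hdig i h'
        · have hik : i = k := by omega
          rw [hik]
          exact hdk
  exact ⟨hx1', fun i => (main n le_rfl).2 i i.isLt⟩

end PartB3
section PartB4

variable {β : ℝ} {n : ℕ}

lemma aux_div (a x y : ℝ) (ha : 0 < a) (hx : 0 < x) (hy : 0 < y) :
    (a/(4*x)) * (2*y/a) = y/(2*x) := by
  field_simp
  ring

set_option maxHeartbeats 1000000 in
lemma len_bound (hβ : 1 < β) {ξ : ℝ} (hξ1 : 1 < ξ) (hξβ : ξ ≤ β) {N₁ : ℕ}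
    (hN : ∀ m γ, N₁ ≤ m → γ ∈ cylP m (prefixW β m) → ξ ≤ γ)
    (hn : N₁ ≤ n) (hn1 : 1 ≤ n) :
    min ((ξ-1)/(8*β^(2*n))) (1/(4*(n:ℝ))) ≤ rEnd β n - lEnd β n := by
  classical
  set C := cylP n (prefixW β n) with hCdef
  set g := lEnd β n with hgdef
  have hgInf : g = sInf C := rfl
  have hCne : C.Nonempty := ⟨β, beta_mem hβ⟩
  have hbdd : BddBelow C := cyl_bddBelow
  have hbddA : BddAbove C := cyl_bddAbove hn1
  have hgβ : g ≤ β := csInf_le hbdd (beta_mem hβ)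
  have hξg : ξ ≤ g := le_csInf hCne (fun γ hγ => hN n γ hn hγ)
  have hg1 : 1 < g := lt_of_lt_of_le hξ1 hξg
  have hg0 : (0:ℝ) < g := by linarith
  have hcl : g ∈ closure C := csInf_mem_closure hCne hbdd
  -- Fp values at g lie in [0,1]
  have hIcc : ∀ k, 1 ≤ k → k ≤ n → Fp β k g ∈ Set.Icc (0:ℝ) 1 := by
    intro k h1 h2
    have hmap : Set.MapsTo (Fp β k) C (Set.Icc (0:ℝ) 1) :=
      fun γ hγ => Set.Ico_subset_Icc_self (Fp_mem_Ico hγ h1 h2)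
    have := map_mem_closure (Fp_cont β k) hcl hmap
    rwa [IsClosed.closure_eq isClosed_Icc] at this
  -- monotonicity
  have hJ : ∀ k, 1 ≤ k → k ≤ n → ∀ γ, γ ∈ C → Fp β k g + (γ - g) ≤ Fp β k γ := by
    intro k
    induction k with
    | zero => intro h; omega
    | succ k ih =>
      intro _ h2 γ hγ
      have hgγ : g ≤ γ := csInf_le hbdd hγ
      have hγ1 : 1 < γ := hγ.1
      rcases Nat.eq_zero_or_pos k with h | h
      · subst h
        simp only [Fp]
        linarith
      · have ihk := ih h (by omega) γ hγ
        have h0 : 0 ≤ Fp β k g := (hIcc k h (by omega)).1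
        simp only [Fp]
        nlinarith [ihk, h0, hγ1, hgγ]
    -- goal in succ: g * Fp k g - e + (γ - g) ≤ γ * Fp k γ - e
  have hlt1 : ∀ k, 1 ≤ k → k ≤ n → Fp β k g < 1 := by
    intro k h1 h2
    have hJβ := hJ k h1 h2 β (beta_mem hβ)
    have hβlt := (Fp_mem_Ico (beta_mem hβ) h1 h2).2
    linarith
  have hgC : g ∈ C :=
    mem_of_Fp hg1 (fun k h1 h2 => ⟨(hIcc k h1 h2).1, hlt1 k h1 h2⟩)
  -- existence of a zero
  have hzero_ex : ∃ k', 1 ≤ k' ∧ k' ≤ n ∧ Fp β k' g = 0 := by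
    by_contra hcon
    push_neg at hcon
    have hoo : ∀ k ∈ Finset.Icc 1 n, ∀ᶠ x in nhds g, Fp β k x ∈ Set.Ioo (0:ℝ) 1 := by
      intro k hk
      simp only [Finset.mem_Icc] at hk
      have hmem : Fp β k g ∈ Set.Ioo (0:ℝ) 1 :=
        ⟨lt_of_le_of_ne (hIcc k hk.1 hk.2).1 (Ne.symm (hcon k hk.1 hk.2)), hlt1 k hk.1 hk.2⟩
      exact (Fp_cont β k).continuousAt.eventually_mem (isOpen_Ioo.mem_nhds hmem)
    have hall : ∀ᶠ x in nhds g,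
        (∀ k ∈ Finset.Icc 1 n, Fp β k x ∈ Set.Ioo (0:ℝ) 1) ∧ 1 < x :=
      ((Finset.Icc 1 n).eventually_all.2 hoo).and (eventually_gt_nhds hg1)
    have hlt : ∀ᶠ x in nhdsWithin g (Set.Iio g), x < g :=
      eventually_mem_nhdsWithin.mono (fun x hx => hx)
    have hgle := (hlt.and (hall.filter_mono nhdsWithin_le_nhds)).exists
    obtain ⟨x, hxg, hx⟩ := hgle
    have hxC : x ∈ C := mem_of_Fp hx.2
      (fun k h1 h2 =>
        ⟨le_of_lt (hx.1 k (Finset.mem_Icc.2 ⟨h1, h2⟩)).1,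
         (hx.1 k (Finset.mem_Icc.2 ⟨h1, h2⟩)).2⟩)
    have := csInf_le hbdd hxC
    linarith
  obtain ⟨k', hk'1, hk'n, hk'0⟩ := hzero_ex
  have hTk' : (Tb g)^[k'] 1 = 0 := by rw [← Fp_eq_T hgC k' hk'n]; exact hk'0
  -- last nonzero digit
  have hdig0 : digit g 1 0 ≠ 0 := by have := digit0_pos hg1; omega
  set Ld := Nat.findGreatest (fun i => digit g 1 i ≠ 0) (k'-1) with hLddef
  have hLd : digit g 1 Ld ≠ 0 := Nat.findGreatest_spec (P := fun i => digit g 1 i ≠ 0) (Nat.zero_le _) hdig0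
  have hLk' : Ld ≤ k'-1 := Nat.findGreatest_le _
  have hzero : ∀ x, Ld < x → digit g 1 x = 0 := by
    intro x hx
    rcases le_or_gt x (k'-1) with h | h
    · exact not_not.1 (Nat.findGreatest_is_greatest hx h)
    · have hk'x : k' ≤ x := by omega
      have h0 := digit_zero_forward k' hTk' (x - k')
      rwa [show k' + (x - k') = x by omega] at h0
  set M := Ld + 1 with hMdef
  have hM1 : 1 ≤ M := by omega
  have hMn : M ≤ n := by omega
  have hTM : (Tb g)^[M] 1 = 0 :=
    T_eq_zero_of_digits_zero hg1 M hM1 (fun i => hzero (M+i) (by omega))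
  have hchain := chain hg1 hM1 (by simpa [hMdef] using hLd) (fun x hx => hzero x (by omega))
  -- Δ
  set D1 := (g-1) / (4 * g^(2*M)) with hD1def
  set D2 := (g-1) / (4 * g^n) with hD2def
  set D3 := g / (2*(n:ℝ)) with hD3def
  set Δ := min D1 (min D2 D3) with hΔdef
  have hn0 : (0:ℝ) < (n:ℝ) := by exact_mod_cast hn1
  have hD1pos : 0 < D1 := by rw [hD1def]; exact div_pos (by linarith) (by nlinarith [pow_pos hg0 (2*M), pow_pos hg0 n])
  have hD2pos : 0 < D2 := by rw [hD2def]; exact div_pos (by linarith) (by nlinarith [pow_pos hg0 n])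
  have hD3pos : 0 < D3 := by rw [hD3def]; exact div_pos hg0 (by linarith)
  have hΔpos : 0 < Δ := lt_min hD1pos (lt_min hD2pos hD3pos)
  -- geometric sum bound
  have hGb : ∀ k, k ≤ n → ∑ i ∈ Finset.range k, (g+Δ)^i ≤ 2 * g^k / (g - 1) := by
    intro k hk
    have hΔg : Δ ≤ g / (2*(n:ℝ)) := le_trans (min_le_right _ _) (min_le_right _ _)
    set t := Δ / g with htdef
    have ht0 : 0 ≤ t := by rw [htdef]; exact le_of_lt (div_pos hΔpos hg0)
    have htn : 2*(n:ℝ)*t ≤ 1 := by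
      rw [htdef]
      rw [show 2*(n:ℝ)*(Δ/g) = (2*(n:ℝ)*Δ)/g by ring]
      rw [div_le_one hg0]
      calc 2*(n:ℝ)*Δ ≤ 2*(n:ℝ)*(g/(2*(n:ℝ))) := by
            apply mul_le_mul_of_nonneg_left hΔg (by positivity)
        _ = g := by field_simp
    have hpow : ∀ i, i ≤ n → (g+Δ)^i ≤ 2 * g^i := by
      intro i hi
      have hsplit : g + Δ = g * (1 + t) := by
        rw [htdef]; field_simp
      rw [hsplit, mul_pow]
      have h2it : 2*(i:ℝ)*t ≤ 1 := by
        refine le_trans ?_ htn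
        have : (i:ℝ) ≤ (n:ℝ) := by exact_mod_cast hi
        nlinarith
      have hble := pow_le_one_add ht0 i h2it
      have hle2 : (1+t)^i ≤ 2 := by linarith
      calc g^i * (1+t)^i ≤ g^i * 2 :=
            mul_le_mul_of_nonneg_left hle2 (pow_nonneg (by linarith) i)
        _ = 2 * g^i := by ring
    calc ∑ i ∈ Finset.range k, (g+Δ)^i
        ≤ ∑ i ∈ Finset.range k, 2*g^i := by
          apply Finset.sum_le_sum
          intro i hi
          simp only [Finset.mem_range] at hi
          exact hpow i (by omega)
      _ = 2 * ∑ i ∈ Finset.range k, g^i := by rw [Finset.mul_sum]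
      _ ≤ 2 * (g^k/(g-1)) := by
          have hge : ∑ i ∈ Finset.range k, g^i = (g^k - 1)/(g-1) :=
            geom_sum_eq (by linarith) k
          rw [hge]
          have : (g^k - 1)/(g-1) ≤ g^k/(g-1) := by
            apply div_le_div_of_nonneg_right ?_ (by linarith)
            linarith
          linarith
      _ = 2*g^k/(g-1) := by ring
  -- the key condition
  have hcond : ∀ k, 1 ≤ k → k ≤ n →
      Δ * (∑ i ∈ Finset.range k, (g+Δ)^i) < 1 - Fp β k g := by
    intro k h1 h2
    have hG := hGb k h2
    have hGpos : 0 ≤ ∑ i ∈ Finset.range k, (g+Δ)^i := geom_pos (by linarith) k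
    have hΔG : Δ * (∑ i ∈ Finset.range k, (g+Δ)^i) ≤ Δ * (2*g^k/(g-1)) :=
      mul_le_mul_of_nonneg_left hG (le_of_lt hΔpos)
    have hgk : (0:ℝ) < g^k := pow_pos hg0 k
    rcases le_or_gt k M with hkM | hkM
    · have hch := hchain k h1 hkM
      have hFp : Fp β k g = (Tb g)^[k] 1 := Fp_eq_T hgC k h2
      have hg2M : (0:ℝ) < g^(2*M) := pow_pos hg0 _
      have hq : g^k / g^(2*M) ≤ 1 - Fp β k g := by
        rw [hFp, div_le_iff₀ hg2M]
        linarith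
      have hkey : Δ * (2*g^k/(g-1)) ≤ g^k/(2*g^(2*M)) := by
        have hΔ1 : Δ ≤ D1 := min_le_left _ _
        have h5 : Δ * (2*g^k/(g-1)) ≤ D1 * (2*g^k/(g-1)) := by
          exact mul_le_mul_of_nonneg_right hΔ1 (div_nonneg (by nlinarith [pow_pos hg0 k]) (by linarith))
        have h6 : D1 * (2*g^k/(g-1)) = g^k/(2*g^(2*M)) := by
          rw [hD1def]
          exact aux_div (g-1) (g^(2*M)) (g^k) (by linarith) (pow_pos hg0 _) (pow_pos hg0 _)
        linarith
      have hhalf : g^k/(2*g^(2*M)) < g^k/g^(2*M) := by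
        apply div_lt_div_of_pos_left hgk hg2M
        linarith
      linarith
    · have hTk : (Tb g)^[k] 1 = 0 := by
        have h0 := T_zero_forward M hTM (k - M)
        rwa [show M + (k-M) = k by omega] at h0
      have hFp : Fp β k g = 0 := by rw [Fp_eq_T hgC k h2, hTk]
      rw [hFp, sub_zero]
      have hgn : (0:ℝ) < g^n := pow_pos hg0 n
      have hkey : Δ * (2*g^k/(g-1)) ≤ g^k/(2*g^n) := by
        have hΔ2 : Δ ≤ D2 := le_trans (min_le_right _ _) (min_le_left _ _)
        have h5 : Δ * (2*g^k/(g-1)) ≤ D2 * (2*g^k/(g-1)) := by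
          exact mul_le_mul_of_nonneg_right hΔ2 (div_nonneg (by nlinarith [pow_pos hg0 k]) (by linarith))
        have h6 : D2 * (2*g^k/(g-1)) = g^k/(2*g^n) := by
          rw [hD2def]
          exact aux_div (g-1) (g^n) (g^k) (by linarith) (pow_pos hg0 _) (pow_pos hg0 _)
        linarith
      have hfin : g^k/(2*g^n) ≤ 1/2 := by
        rw [div_le_div_iff₀ (by linarith) (by norm_num)]
        have : g^k ≤ g^n := pow_le_pow_right₀ (by linarith) h2
        linarith
      linarith
  -- conclusion
  have hsub := cyl_interval hgC hΔpos hcond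
  have hmem2 : g + Δ/2 ∈ C := hsub (g + Δ/2) (by linarith) (by linarith)
  have hr : g + Δ/2 ≤ rEnd β n := le_csSup hbddA hmem2
  have hlen : Δ/2 ≤ rEnd β n - lEnd β n := by
    rw [← hgdef]
    linarith
  -- numeric bound : min X Y ≤ Δ/2
  have hbn : (0:ℝ) < β^(2*n) := pow_pos (by linarith) _
  have hXD1 : (ξ-1)/(8*β^(2*n)) ≤ D1/2 := by
    rw [hD1def]
    rw [show (g-1)/(4*g^(2*M))/2 = (g-1)/(8*g^(2*M)) by ring]
    apply div_le_div₀ (by linarith) (by linarith) (by nlinarith [pow_pos hg0 (2*M)])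
    have hgM : g^(2*M) ≤ β^(2*M) := pow_le_pow_left₀ (by linarith) hgβ _
    have hβM : β^(2*M) ≤ β^(2*n) := pow_le_pow_right₀ (by linarith) (by omega)
    nlinarith
  have hXD2 : (ξ-1)/(8*β^(2*n)) ≤ D2/2 := by
    rw [hD2def]
    rw [show (g-1)/(4*g^n)/2 = (g-1)/(8*g^n) by ring]
    apply div_le_div₀ (by linarith) (by linarith) (by nlinarith [pow_pos hg0 n])
    have hgM : g^n ≤ β^n := pow_le_pow_left₀ (by linarith) hgβ _
    have hβM : β^n ≤ β^(2*n) := pow_le_pow_right₀ (by linarith) (by omega)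
    nlinarith
  have hYD3 : 1/(4*(n:ℝ)) ≤ D3/2 := by
    rw [hD3def]
    rw [show g/(2*(n:ℝ))/2 = g/(4*(n:ℝ)) by ring]
    exact (div_le_div_iff_of_pos_right (by linarith)).2 (by linarith)
  have hminle : min ((ξ-1)/(8*β^(2*n))) (1/(4*(n:ℝ))) ≤ Δ/2 := by
    rw [hΔdef]
    rw [show min D1 (min D2 D3) / 2 = min (D1/2) (min (D2/2) (D3/2)) by
      rw [min_div_div_right (by norm_num : (0:ℝ) ≤ 2), min_div_div_right (by norm_num : (0:ℝ) ≤ 2)]]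
    refine le_min (le_trans (min_le_left _ _) hXD1) (le_min ?_ ?_)
    · exact le_trans (min_le_left _ _) hXD2
    · exact le_trans (min_le_right _ _) hYD3
  linarith

end PartB4
section PartC

open Filter

variable {β : ℝ}

lemma limsup_g_ge_one (hβ : 1 < β) :
    1 ≤ Filter.limsup (fun n : ℕ => ((tauN β n - tN β n : ℕ) : ℝ) / n) Filter.atTop := by
  apply Filter.le_limsup_of_frequently_le
  · rw [Filter.frequently_atTop]
    intro N
    obtain ⟨n, hn, hτ⟩ := freq_tau_eq hβ (max N 1)
    have hn1 : 1 ≤ n := le_trans (le_max_right N 1) hn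
    refine ⟨n, le_trans (le_max_left N 1) hn, ?_⟩
    have ht : tN β n = 0 := by
      rw [tN, hτ, Nat.div_self (by omega : 0 < n), one_mul, Nat.sub_self]
    rw [ht, hτ, Nat.sub_zero]
    rw [div_self (by exact_mod_cast (by omega : n ≠ 0) : (n:ℝ) ≠ 0)]
  · apply Filter.isBoundedUnder_of_eventually_le (a := (1:ℝ))
    filter_upwards [Filter.eventually_ge_atTop 1] with n hn
    have h1 : tauN β n - tN β n ≤ n := le_trans (Nat.sub_le _ _) (tauN_le β n)
    have hn0 : (0:ℝ) < n := by exact_mod_cast hn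
    rw [div_le_one hn0]
    exact_mod_cast h1

lemma len_le_one (hβ : 1 < β) {n : ℕ} (hn : 1 ≤ n) : rEnd β n - lEnd β n ≤ 1 := by
  have hCne : (cylP n (prefixW β n)).Nonempty := ⟨β, beta_mem hβ⟩
  have h1 : rEnd β n ≤ (digit β 1 0 : ℝ) + 1 :=
    csSup_le hCne (fun γ hγ => le_of_lt (mem_lt_upper hn hγ))
  have h2 : (digit β 1 0 : ℝ) ≤ lEnd β n :=
    le_csInf hCne (fun γ hγ => mem_ge_lower hn hγ)
  linarith

theorem upper_density_le' (β : ℝ) (hβ : 1 < β) :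
    Filter.limsup
      (fun n : ℕ => -(Real.log (rEnd β n - lEnd β n) / Real.log β) / n)
      Filter.atTop ≤
      1 + Filter.limsup (fun n : ℕ => ((tauN β n - tN β n : ℕ) : ℝ) / n) Filter.atTop := by
  have hlogβ : 0 < Real.log β := Real.log_pos hβ
  obtain ⟨ξ, hξ1, hξβ, N₁, hN₁1, hN⟩ := exists_xi hβ
  set c : ℝ := (ξ - 1)/32 with hcdef
  have hc0 : 0 < c := by rw [hcdef]; linarith
  have hlen : ∀ n : ℕ, N₁ ≤ n → 1 ≤ n →
      c / ((n:ℝ) * β^(2*n)) ≤ rEnd β n - lEnd β n := by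
    intro n h1 h2
    have hb := len_bound hβ hξ1 hξβ hN h1 h2
    set A := (ξ-1)/(8*β^(2*n)) with hA
    set B := 1/(4*(n:ℝ)) with hB
    have hn0 : (0:ℝ) < n := by exact_mod_cast h2
    have hb2n : (0:ℝ) < β^(2*n) := pow_pos (by linarith) _
    have hA0 : 0 < A := by rw [hA]; exact div_pos (by linarith) (by linarith)
    have hB0 : 0 < B := by rw [hB]; exact div_pos one_pos (by linarith)
    have hn1' : (1:ℝ) ≤ (n:ℝ) := by exact_mod_cast h2
    have hB1 : B ≤ 1 := by rw [hB, div_le_one (by linarith)]; linarith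
    have hA1 : A ≤ 1 := by
      rw [hA, div_le_one (by linarith)]
      have hββ : β ≤ β^(2*n) := le_self_pow₀ (by linarith) (by omega)
      linarith
    have hAB : A * B = c / ((n:ℝ) * β^(2*n)) := by
      rw [hA, hB, hcdef, div_mul_div_comm, div_div, mul_one]
      congr 1
      ring
    have hminAB : A * B ≤ min A B := by
      rcases le_total A B with h | h
      · rw [min_eq_left h]; nlinarith
      · rw [min_eq_right h]; nlinarith
    rw [← hAB]
    exact le_trans hminAB hb
  -- u n ≤ 2 + v n eventually
  have huv : ∀ᶠ n : ℕ in atTop,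
      -(Real.log (rEnd β n - lEnd β n) / Real.log β) / n
        ≤ 2 + (Real.log n - Real.log c)/((n:ℝ) * Real.log β) ∧
      0 ≤ -(Real.log (rEnd β n - lEnd β n) / Real.log β) / n := by
    filter_upwards [eventually_ge_atTop (max N₁ 1)] with n hn
    have h1 : N₁ ≤ n := le_trans (le_max_left _ _) hn
    have h2 : 1 ≤ n := le_trans (le_max_right _ _) hn
    have hn0 : (0:ℝ) < n := by exact_mod_cast h2
    have hb2n : (0:ℝ) < β^(2*n) := pow_pos (by linarith) _
    have hlow := hlen n h1 h2
    have hq0 : 0 < c / ((n:ℝ) * β^(2*n)) := div_pos hc0 (by positivity)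
    have hlen0 : 0 < rEnd β n - lEnd β n := lt_of_lt_of_le hq0 hlow
    have hup := len_le_one hβ h2
    have hlog1 : Real.log (c/((n:ℝ)*β^(2*n))) ≤ Real.log (rEnd β n - lEnd β n) :=
      Real.log_le_log hq0 hlow
    have hlogc : Real.log (c/((n:ℝ)*β^(2*n)))
        = Real.log c - (Real.log n + (2*(n:ℝ))*Real.log β) := by
      rw [Real.log_div (ne_of_gt hc0) (by positivity),
        Real.log_mul (ne_of_gt hn0) (ne_of_gt hb2n), Real.log_pow]
      push_cast
      ring
    have hterm : -(Real.log (rEnd β n - lEnd β n))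
        ≤ -(Real.log c) + Real.log n + (2*(n:ℝ))*Real.log β := by
      linarith
    constructor
    · have e1 : -(Real.log (rEnd β n - lEnd β n) / Real.log β) / n
          = -(Real.log (rEnd β n - lEnd β n)) / (Real.log β * n) := by
        ring
      rw [e1]
      have e2 : -(Real.log (rEnd β n - lEnd β n)) / (Real.log β * n)
          ≤ (-(Real.log c) + Real.log n + (2*(n:ℝ))*Real.log β) / (Real.log β * n) :=
        div_le_div_of_nonneg_right hterm (by positivity)
      have e3 : (-(Real.log c) + Real.log n + (2*(n:ℝ))*Real.log β) / (Real.log β * n)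
          = 2 + (Real.log n - Real.log c)/((n:ℝ) * Real.log β) := by
        have hlogβne : Real.log β ≠ 0 := ne_of_gt hlogβ
        have hnne : (n:ℝ) ≠ 0 := ne_of_gt hn0
        field_simp
        ring
      linarith
    · have hlog_np : Real.log (rEnd β n - lEnd β n) ≤ 0 :=
        Real.log_nonpos (le_of_lt hlen0) hup
      have : 0 ≤ -(Real.log (rEnd β n - lEnd β n) / Real.log β) := by
        rw [neg_nonneg]
        exact div_nonpos_of_nonpos_of_nonneg hlog_np (le_of_lt hlogβ)
      positivity
  -- tendsto of the correction term
  have hv0 : Tendsto (fun n : ℕ => (Real.log n - Real.log c)/((n:ℝ) * Real.log β))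
      atTop (nhds 0) := by
    have t1 : Tendsto (fun n : ℕ => Real.log n / n) atTop (nhds 0) :=
      by
        have h0 := Real.isLittleO_log_id_atTop.tendsto_div_nhds_zero
        exact h0.comp tendsto_natCast_atTop_atTop
    have t2 : Tendsto (fun n : ℕ => Real.log c / n) atTop (nhds 0) :=
      tendsto_const_div_atTop_nhds_zero_nat _
    have t3 := (t1.sub t2).mul_const (1/Real.log β)
    simp only [zero_sub, sub_zero, zero_mul] at t3
    have heq : (fun n : ℕ => (Real.log n - Real.log c)/((n:ℝ) * Real.log β))
        = fun n : ℕ => (Real.log n / n - Real.log c / n) * (1/Real.log β) := by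
      funext n
      simp only [div_eq_mul_inv, mul_inv, one_mul]
      ring
    rw [heq]
    simpa using t3
  -- limsup u ≤ 2
  have hlimsup2 : Filter.limsup
      (fun n : ℕ => -(Real.log (rEnd β n - lEnd β n) / Real.log β) / n)
      Filter.atTop ≤ 2 := by
    have hcob : Filter.IsCoboundedUnder (· ≤ ·) Filter.atTop
        (fun n : ℕ => -(Real.log (rEnd β n - lEnd β n) / Real.log β) / n) :=
      Filter.isCoboundedUnder_le_of_eventually_le Filter.atTop
        (x := 0) (huv.mono (fun n h => h.2))
    apply le_of_forall_pos_le_add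
    intro ε hε
    apply Filter.limsup_le_of_le hcob
    have hev : ∀ᶠ n : ℕ in atTop,
        (Real.log n - Real.log c)/((n:ℝ) * Real.log β) < ε :=
      hv0.eventually (eventually_lt_nhds hε)
    filter_upwards [huv, hev] with n h1 h2
    linarith [h1.1]
  have hg := limsup_g_ge_one hβ
  linarith
end PartC

end AuxProof

theorem upper_density_le (β : ℝ) (hβ : 1 < β) :
    Filter.limsup
      (fun n : ℕ => -(Real.log (rEnd β n - lEnd β n) / Real.log β) / n)
      Filter.atTop ≤
      1 + Filter.limsup (fun n : ℕ => ((tauN β n - tN β n : ℕ) : ℝ) / n) Filter.atTop := upper_density_le' β hβ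
end

section
/- Let 1 < β₁ < β₂ and 1 ≤ k < n. Then the set Λ_{n,k}(β₁,β₂) of self-admissible words ω of length n realized as prefixes of ε(1,β) for some β ∈ (β₁,β₂] and satisfying ω_{t(ω)+1} = ⋯ = ω_{t(ω)+k} = 0 has cardinality at most β₂^{n-k+1}/(β₂ - 1). -/
open Filter Topology

/-- Words of length `n` realized as prefixes of `ε(1, β)` for some `β ∈ (β₁, β₂]`. -/
def LamN (β₁ β₂ : ℝ) (n : ℕ) : Set (Fin n → ℕ) :=
  {ω | ∃ β : ℝ, β₁ < β ∧ β ≤ β₂ ∧ ∀ i : Fin n, digit β 1 i = ω i}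

/-- `t(ω) = n - ⌊n / τ(ω)⌋ τ(ω)`. -/
noncomputable def tW {n : ℕ} (ω : Fin n → ℕ) : ℕ := n - (n / tau ω) * tau ω

/-!
Write `t = t(ω)` and `τ = τ(ω)`. Since `τ` is a period of `ω` and `t = n mod τ`, the first `t`
letters of `ω` reappear as its last `t` letters, and since `ω_1 ≠ 0` the zero block
`ω_{t+1} ⋯ ω_{t+k}` lies inside the first period. Hence `ω` is determined by
`(0^t, ω_{t+k+1}, …, ω_n)`: two words `ω, ϖ` with `t(ω) ≤ t(ϖ)` and the same image agree from
position `t(ϖ) + k` on, so they have the same tails, and self-admissibility of both, comparing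
those tails with the heads, forces the heads to coincide.

The image word is dominated by `ε_{k+1}(1, β) ⋯ ε_n(1, β)` with `β ≤ β₂`, so all its suffixes have
value below `1` in base `β₂`. There are at most `1 + β₂ + ⋯ + β₂^m` such words of length `m`:
those whose suffix values starting at `j` are all at most `1 - β₂^{-(m-j)}` have values that are
`β₂^{-m}`-separated, and every other one is determined by its first `m - 1` letters.
-/

open Finset

section Lex

lemma lexLe_iff_toLex_le {a b : ℕ → ℕ} : lexLe a b ↔ toLex a ≤ toLex b := by
  rw [le_iff_lt_or_eq, toLex_inj]
  rfl

lemma toLex_cut_le_cut {a b : ℕ → ℕ} (h : toLex a ≤ toLex b) (s : ℕ) :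
    toLex (fun k => if k < s then a k else 0) ≤ toLex (fun k => if k < s then b k else 0) := by
  rcases h.lt_or_eq with h | h
  · obtain ⟨i, hagree, hi⟩ : lexLt a b := h
    by_cases his : i < s
    · refine le_of_lt (show lexLt (fun k => if k < s then a k else 0)
        (fun k => if k < s then b k else 0) from ⟨i, fun j hj => ?_, ?_⟩)
      · simp only [hagree j hj]
      · simpa only [his, if_true] using hi
    · refine le_of_eq (congrArg toLex (funext fun j => ?_))
      split_ifs with hj
      exacts [hagree j (by omega), rfl]
  · rw [toLex_inj.mp h]

end Lex

section BetaTransformation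

variable {β x y : ℝ}

lemma Tb_iterate_nonneg (hx : 0 ≤ x) : ∀ j, 0 ≤ (Tb β)^[j] x
  | 0 => hx
  | j + 1 => by rw [Function.iterate_succ_apply']; exact Int.fract_nonneg _

lemma Tb_iterate_lt_one {j : ℕ} (hj : j ≠ 0) : (Tb β)^[j] x < 1 := by
  obtain ⟨i, rfl⟩ := Nat.exists_eq_succ_of_ne_zero hj
  rw [Function.iterate_succ_apply']
  exact Int.fract_lt_one _

lemma digit_cast_s19 (hβ : 0 ≤ β) (hx : 0 ≤ x) (j : ℕ) :
    (digit β x j : ℝ) = ⌊β * (Tb β)^[j] x⌋ := by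
  have h : (0 : ℤ) ≤ ⌊β * (Tb β)^[j] x⌋ :=
    Int.floor_nonneg.mpr (mul_nonneg hβ (Tb_iterate_nonneg hx j))
  rw [digit, ← Int.cast_natCast, Int.toNat_of_nonneg h]

lemma Tb_iterate_succ (hβ : 0 ≤ β) (hx : 0 ≤ x) (j : ℕ) :
    (Tb β)^[j + 1] x = β * (Tb β)^[j] x - digit β x j := by
  rw [Function.iterate_succ_apply', digit_cast_s19 hβ hx]
  rfl

lemma digit_add (x : ℝ) (i j : ℕ) : digit β x (j + i) = digit β ((Tb β)^[i] x) j := by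
  rw [digit, digit, Function.iterate_add_apply]

lemma one_le_digit_one_zero (hβ : 1 ≤ β) : 1 ≤ digit β 1 0 := by
  have : (1 : ℤ) ≤ ⌊β⌋ := Int.le_floor.mpr (by exact_mod_cast hβ)
  simp only [digit, Function.iterate_zero, id_eq, mul_one]
  omega

lemma sum_digits_div_pow (hβ : 0 < β) (hx : 0 ≤ x) {a b : ℕ} (hab : a ≤ b) :
    ∑ i ∈ Ico a b, (digit β x i : ℝ) / β ^ (i + 1 - a)
      = (Tb β)^[a] x - (Tb β)^[b] x / β ^ (b - a) := by
  induction b, hab using Nat.le_induction with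
  | base => simp
  | succ b hab ih =>
    rw [sum_Ico_succ_top hab, ih, Tb_iterate_succ hβ.le hx b, show b + 1 - a = b - a + 1 by omega,
      pow_succ]
    field_simp
    ring

lemma Tb_iterate_sub (hβ : 0 ≤ β) (hx : 0 ≤ x) (hy : 0 ≤ y) {j : ℕ}
    (h : ∀ i < j, digit β x i = digit β y i) :
    (Tb β)^[j] x - (Tb β)^[j] y = β ^ j * (x - y) := by
  induction j with
  | zero => simp
  | succ j ih =>
    rw [Tb_iterate_succ hβ hx, Tb_iterate_succ hβ hy, h j j.lt_succ_self, pow_succ',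
      mul_assoc, ← ih fun i hi => h i (hi.trans j.lt_succ_self)]
    ring

lemma toLex_digit_mono (hβ : 0 ≤ β) (hx : 0 ≤ x) (hxy : x ≤ y) :
    toLex (digit β x) ≤ toLex (digit β y) := by
  by_contra! h
  obtain ⟨i, hagree, hi⟩ : lexLt (digit β y) (digit β x) := h
  have hsub := Tb_iterate_sub hβ (hx.trans hxy) hx fun j hj => hagree j hj
  have hTi : (Tb β)^[i] x ≤ (Tb β)^[i] y := by
    nlinarith [mul_nonneg (pow_nonneg hβ i) (sub_nonneg.2 hxy)]
  have : digit β x i ≤ digit β y i :=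
    Int.toNat_le_toNat (Int.floor_mono (mul_le_mul_of_nonneg_left hTi hβ))
  omega

end BetaTransformation

section Words

variable {n : ℕ}

lemma pad_of_lt (ω : Fin n → ℕ) {i : ℕ} (hi : i < n) : pad ω i = ω ⟨i, hi⟩ := dif_pos hi

lemma pad_of_le (ω : Fin n → ℕ) {i : ℕ} (hi : n ≤ i) : pad ω i = 0 := dif_neg (by omega)

lemma pad_injective : Function.Injective (pad : (Fin n → ℕ) → ℕ → ℕ) :=
  fun ω ϖ h => funext fun i => by rw [← pad_of_lt ω i.isLt, ← pad_of_lt ϖ i.isLt, h]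

/-- `σ^i ε(1, β)` is the expansion of `T_β^i 1 < 1`. -/
lemma selfAdmissible_of_digit_eq {β : ℝ} (hβ : 1 < β) {ω : Fin n → ℕ}
    (hd : ∀ i : Fin n, digit β 1 i = ω i) : selfAdmissible ω := by
  have hpad : ∀ p, pad ω p = if p < n then digit β 1 p else 0 := fun p => by
    split_ifs with hp
    · rw [pad_of_lt ω hp, ← hd]
    · exact pad_of_le ω (by omega)
  intro i hi hin
  rw [lexLe_iff_toLex_le]
  convert toLex_cut_le_cut (toLex_digit_mono (by linarith) (Tb_iterate_nonneg zero_le_one i)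
    (Tb_iterate_lt_one (x := 1) (by omega)).le) (n - i) using 2 with k
  · funext k
    rw [hpad, ← digit_add]
    exact if_congr (by omega) rfl rfl
  · funext k
    simp only [trunc, hpad]
    split_ifs <;> first | rfl | omega

lemma pad_zero_ne_zero {β : ℝ} (hβ : 1 < β) (hn : 0 < n) {ω : Fin n → ℕ}
    (hd : ∀ i : Fin n, digit β 1 i = ω i) : pad ω 0 ≠ 0 := by
  rw [pad_of_lt ω hn, ← hd]
  exact Nat.one_le_iff_ne_zero.mp (one_le_digit_one_zero hβ.le)

def suffix (ω : Fin n → ℕ) (s : ℕ) : ℕ → ℕ := fun j => pad ω (j + (n - s))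

lemma suffix_congr {ω ϖ : Fin n → ℕ} {c s : ℕ} (h : ∀ j, c ≤ j → pad ω j = pad ϖ j)
    (hs : c ≤ n - s) : suffix ω s = suffix ϖ s :=
  funext fun j => h _ (by omega)

lemma toLex_suffix_le_trunc {ω : Fin n → ℕ} (h : selfAdmissible ω) {s : ℕ} (hs : s ≤ n) :
    toLex (suffix ω s) ≤ toLex (trunc ω s) := by
  by_cases hs' : 0 < s ∧ s < n
  · have := h (n - s) (by omega) (by omega)
    rwa [Nat.sub_sub_self hs, lexLe_iff_toLex_le] at this
  · refine le_of_eq (congrArg toLex (funext fun j => ?_))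
    simp only [suffix, trunc]
    split_ifs with hj
    · congr 1; omega
    · exact pad_of_le ω (by omega)

end Words

section Periodicity

variable {n : ℕ} {ω : Fin n → ℕ} {p : ℕ}

def HasPeriod (ω : Fin n → ℕ) (p : ℕ) : Prop := ∀ j, j < n - p → pad ω (p + j) = pad ω j

lemma HasPeriod.pad_mod (h : HasPeriod ω p) (hp : 0 < p) {j : ℕ} (hj : j < n) :
    pad ω j = pad ω (j % p) := by
  induction j using Nat.strong_induction_on with
  | _ j ih =>
    rcases lt_or_ge j p with hjp | hjp
    · rw [Nat.mod_eq_of_lt hjp]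
    · rw [← Nat.sub_add_cancel hjp, add_comm, h _ (by omega), Nat.add_mod_left]
      exact ih _ (by omega) (by omega)

lemma HasPeriod.suffix_mod (h : HasPeriod ω p) (hp : 0 < p) :
    suffix ω (n % p) = trunc ω (n % p) := by
  have hn := Nat.mod_add_div n p
  funext j
  simp only [suffix, trunc]
  split_ifs with hj
  · rw [h.pad_mod hp (by omega), show j + (n - n % p) = j + p * (n / p) by omega,
      Nat.add_mul_mod_self_left, Nat.mod_eq_of_lt (hj.trans (Nat.mod_lt n hp))]
  · exact pad_of_le ω (by omega)

/-- The block cannot reach `ω_p = ω_0 ≠ 0`. -/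
lemma HasPeriod.le_of_eqOn_zero (h : HasPeriod ω p) (hpn : p < n) (h0 : pad ω 0 ≠ 0)
    {r z : ℕ} (hr : r ≤ p) (hz : Set.EqOn (pad ω) 0 (Set.Ico r z)) : z ≤ p := by
  by_contra! hzp
  have := h 0 (by omega)
  rw [add_zero, hz ⟨hr, hzp⟩] at this
  exact h0 this.symm

lemma tau_le (ω : Fin n → ℕ) : tau ω ≤ n := Nat.sInf_le (Or.inr rfl)

lemma tau_mem (ω : Fin n → ℕ) :
    tau ω ∈ {k | 1 ≤ k ∧ k < n ∧ HasPeriod ω k} ∪ {n} :=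
  Nat.sInf_mem ⟨n, Or.inr rfl⟩

lemma hasPeriod_tau (ω : Fin n → ℕ) : HasPeriod ω (tau ω) := by
  rcases tau_mem ω with h | h
  · exact h.2.2
  · intro j hj
    rw [show tau ω = n from h] at hj
    omega

lemma tau_pos (hn : 0 < n) (ω : Fin n → ℕ) : 0 < tau ω := by
  rcases tau_mem ω with h | h
  · exact h.1
  · rw [show tau ω = n from h]
    exact hn

lemma tW_eq_mod (ω : Fin n → ℕ) : tW ω = n % tau ω := Nat.mod_eq_sub_div_mul.symm

lemma tau_le_sub_tW (hn : 0 < n) (ω : Fin n → ℕ) : tau ω ≤ n - tW ω := by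
  have hτ := tau_pos hn ω
  have h1 : tau ω ≤ tau ω * (n / tau ω) :=
    Nat.le_mul_of_pos_right _ ((Nat.one_le_div_iff hτ).mpr (tau_le ω))
  have h2 := Nat.mod_add_div n (tau ω)
  rw [tW_eq_mod]
  omega

lemma suffix_tW (hn : 0 < n) (ω : Fin n → ℕ) : suffix ω (tW ω) = trunc ω (tW ω) := by
  rw [tW_eq_mod]
  exact (hasPeriod_tau ω).suffix_mod (tau_pos hn ω)

lemma tau_lt {k : ℕ} (h0 : pad ω 0 ≠ 0) (hk : k ≠ 0)
    (hz : Set.EqOn (pad ω) 0 (Set.Ico (tW ω) (tW ω + k))) : tau ω < n := by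
  refine (tau_le ω).lt_of_ne fun hτ => h0 (hz ?_)
  rw [tW_eq_mod, hτ, Nat.mod_self]
  exact ⟨le_rfl, by omega⟩

lemma tW_add_le_sub_tW {k : ℕ} (h0 : pad ω 0 ≠ 0) (hk : k ≠ 0)
    (hz : Set.EqOn (pad ω) 0 (Set.Ico (tW ω) (tW ω + k))) : tW ω + k ≤ n - tW ω := by
  have hτ := tau_lt h0 hk hz
  have hn : 0 < n := by omega
  have htW : tW ω ≤ tau ω := by
    rw [tW_eq_mod]
    exact (Nat.mod_lt _ (tau_pos hn ω)).le
  exact ((hasPeriod_tau ω).le_of_eqOn_zero hτ h0 htW hz).trans (tau_le_sub_tW hn ω)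

end Periodicity

section Squeeze

variable {n k : ℕ}

lemma eq_of_suffix_eq_trunc {ω ϖ : Fin n → ℕ} (hω : selfAdmissible ω) (hϖ : selfAdmissible ϖ)
    {s s' c : ℕ} (hss' : s ≤ s') (hs'c : s' ≤ c) (hc : c ≤ n - s')
    (htail : suffix ω s = trunc ω s) (htail' : suffix ϖ s' = trunc ϖ s')
    (hzero : Set.EqOn (pad ω) 0 (Set.Ico s c)) (hzero' : Set.EqOn (pad ϖ) 0 (Set.Ico s' c))
    (hagree : ∀ j, c ≤ j → pad ω j = pad ϖ j) : ω = ϖ := by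
  have hhead : trunc ω s' = trunc ω s := funext fun j => by
    simp only [trunc]
    split_ifs with h1 h2 h2
    · rfl
    · exact hzero ⟨by omega, by omega⟩
    · omega
    · rfl
  have hle : toLex (trunc ϖ s') ≤ toLex (trunc ω s') := calc
    toLex (trunc ϖ s') = toLex (suffix ω s') := by
      rw [← htail', suffix_congr (fun j hj => (hagree j hj).symm) hc]
    _ ≤ toLex (trunc ω s') := toLex_suffix_le_trunc hω (by omega)
  have hge : toLex (trunc ω s') ≤ toLex (trunc ϖ s') := calc
    toLex (trunc ω s') = toLex (suffix ϖ s) := by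
      rw [hhead, ← htail, suffix_congr hagree (by omega)]
    _ ≤ toLex (trunc ϖ s) := toLex_suffix_le_trunc hϖ (by omega)
    _ ≤ toLex (trunc ϖ s') := Pi.toLex_monotone fun j => by
      simp only [trunc]
      split_ifs <;> omega
  have hheads := toLex_inj.mp (le_antisymm hle hge)
  refine pad_injective (funext fun j => ?_)
  rcases lt_or_ge j s' with hj | hj
  · simpa only [trunc, if_pos hj] using (congrFun hheads j).symm
  rcases lt_or_ge j c with hjc | hjc
  · rw [hzero ⟨by omega, hjc⟩, hzero' ⟨hj, hjc⟩]
  · exact hagree j hjc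

/-- The paper's map `ω ↦ (0^{t(ω)}, ω_{t(ω)+k+1}, …, ω_n)`. -/
noncomputable def squeeze (n k : ℕ) (ω : Fin n → ℕ) : Fin (n - k) → ℕ :=
  fun i => if (i : ℕ) < tW ω then 0 else pad ω (i + k)

lemma pad_squeeze (ω : Fin n → ℕ) (i : ℕ) :
    pad (squeeze n k ω) i = if i < tW ω then 0 else pad ω (i + k) := by
  by_cases hi : i < n - k
  · rw [pad_of_lt _ hi]
    rfl
  · rw [pad_of_le _ (by omega), pad_of_le ω (by omega), ite_self]

lemma injOn_squeeze (hk : k ≠ 0) :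
    Set.InjOn (squeeze n k) {ω | selfAdmissible ω ∧ pad ω 0 ≠ 0 ∧
      Set.EqOn (pad ω) 0 (Set.Ico (tW ω) (tW ω + k))} := by
  rintro ω ⟨hω, h0, hz⟩ ϖ ⟨hϖ, h0', hz'⟩ heq
  wlog hle : tW ω ≤ tW ϖ generalizing ω ϖ
  · exact (this hϖ h0' hz' hω h0 hz heq.symm (by omega)).symm
  have hsq (i : ℕ) := congrFun (congrArg pad heq) i
  simp only [pad_squeeze] at hsq
  have hagree (j : ℕ) (hj : tW ϖ + k ≤ j) : pad ω j = pad ϖ j := by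
    simpa only [if_neg (show ¬ j - k < tW ω by omega), if_neg (show ¬ j - k < tW ϖ by omega),
      Nat.sub_add_cancel (show k ≤ j by omega)] using hsq (j - k)
  have hzero : Set.EqOn (pad ω) 0 (Set.Ico (tW ω) (tW ϖ + k)) := fun j ⟨hj, hj'⟩ => by
    rcases lt_or_ge j (tW ω + k) with hjk | hjk
    · exact hz ⟨hj, hjk⟩
    · simpa only [Pi.zero_apply, if_neg (show ¬ j - k < tW ω by omega),
        if_pos (show j - k < tW ϖ by omega), Nat.sub_add_cancel (show k ≤ j by omega)]
        using hsq (j - k)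
  have hn : 0 < n := by
    by_contra! hn
    exact h0 (pad_of_le ω (by omega))
  exact eq_of_suffix_eq_trunc hω hϖ hle (by omega) (tW_add_le_sub_tW h0' hk hz')
    (suffix_tW hn ω) (suffix_tW hn ϖ) hzero hz' hagree

end Squeeze

section SuffixValue

variable {β : ℝ} {m : ℕ}

noncomputable def suffixValue (β : ℝ) (w : Fin m → ℕ) (j : ℕ) : ℝ :=
  ∑ i ∈ Ico j m, (pad w i : ℝ) / β ^ (i + 1 - j)

/-- Contains `Σ_β^m`: the digits of `x` from position `j` on have value at most `T_β^j x < 1`. -/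
def suffixBoundedWords (β : ℝ) (m : ℕ) : Set (Fin m → ℕ) :=
  {w | ∀ j < m, suffixValue β w j < 1}

def IsFull (β : ℝ) (w : Fin m → ℕ) : Prop :=
  ∀ j ≤ m, suffixValue β w j ≤ 1 - 1 / β ^ (m - j)

lemma suffixValue_nonneg (hβ : 0 ≤ β) (w : Fin m → ℕ) (j : ℕ) : 0 ≤ suffixValue β w j :=
  sum_nonneg fun _ _ => by positivity

lemma suffixValue_self (w : Fin m → ℕ) : suffixValue β w m = 0 := by
  simp [suffixValue]

lemma suffixValue_mono (hβ : 0 ≤ β) {w w' : Fin m → ℕ} (h : ∀ i, pad w i ≤ pad w' i) (j : ℕ) :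
    suffixValue β w j ≤ suffixValue β w' j :=
  sum_le_sum fun i _ => by gcongr; exact h i

lemma suffixValue_anti_base {β' : ℝ} (hβ : 0 < β) (hββ' : β ≤ β') (w : Fin m → ℕ) (j : ℕ) :
    suffixValue β' w j ≤ suffixValue β w j :=
  sum_le_sum fun i _ => by gcongr

lemma suffixValue_of_lt (w : Fin m → ℕ) {j : ℕ} (hj : j < m) :
    suffixValue β w j = (pad w j + suffixValue β w (j + 1)) / β := by
  rw [suffixValue, suffixValue, sum_eq_sum_Ico_succ_bot hj, add_div, sum_div]
  congr 1
  · simp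
  · refine sum_congr rfl fun i hi => ?_
    rw [show i + 1 - j = i + 1 - (j + 1) + 1 by simp at hi; omega, pow_succ, div_div]

lemma div_le_suffixValue (hβ : 0 ≤ β) (w : Fin m → ℕ) {j : ℕ} (hj : j < m) :
    (pad w j : ℝ) / β ≤ suffixValue β w j := by
  rw [suffixValue]
  simpa using single_le_sum (f := fun i => (pad w i : ℝ) / β ^ (i + 1 - j))
    (fun i _ => by positivity) (mem_Ico.mpr ⟨le_rfl, hj⟩)

lemma suffixValue_init (w : Fin (m + 1) → ℕ) {j : ℕ} (hj : j ≤ m) :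
    suffixValue β w j = suffixValue β (Fin.init w) j + w (Fin.last m) / β ^ (m + 1 - j) := by
  rw [suffixValue, sum_Ico_succ_top hj, pad_of_lt w m.lt_succ_self]
  congr 1
  refine sum_congr rfl fun i hi => ?_
  have him : i < m := (mem_Ico.mp hi).2
  rw [pad_of_lt w (him.trans m.lt_succ_self), pad_of_lt (Fin.init w) him]
  rfl

lemma suffixValue_digit (hβ : 0 < β) {x : ℝ} (hx : 0 ≤ x) (a : ℕ) {j : ℕ} (hj : j ≤ m) :
    suffixValue β (fun i : Fin m => digit β x (i + a)) j
      = (Tb β)^[j + a] x - (Tb β)^[m + a] x / β ^ (m - j) := by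
  rw [show m - j = m + a - (j + a) by omega, ← sum_digits_div_pow hβ hx (by omega),
    ← sum_Ico_add']
  refine sum_congr rfl fun i hi => ?_
  rw [pad_of_lt _ (mem_Ico.mp hi).2, show i + a + 1 - (j + a) = i + 1 - j by omega]

lemma suffixValue_sub_suffixValue (hβ : β ≠ 0) {w w' : Fin m → ℕ} {j : ℕ} (hj : j ≤ m)
    (hagree : ∀ i < j, pad w i = pad w' i) :
    suffixValue β w 0 - suffixValue β w' 0 = (suffixValue β w j - suffixValue β w' j) / β ^ j := by
  induction j with
  | zero => simp
  | succ j ih =>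
    rw [ih (by omega) fun i hi => hagree i (by omega), suffixValue_of_lt w (by omega),
      suffixValue_of_lt w' (by omega), hagree j j.lt_succ_self, pow_succ]
    field_simp
    ring

lemma suffixValue_add_le_of_toLex_lt (hβ : 0 < β) {w w' : Fin m → ℕ} (hfull : IsFull β w)
    (hlt : toLex (pad w) < toLex (pad w')) :
    suffixValue β w 0 + 1 / β ^ m ≤ suffixValue β w' 0 := by
  obtain ⟨j, hagree, hj⟩ : lexLt (pad w) (pad w') := hlt
  have hjm : j < m := by
    by_contra! hjm
    rw [pad_of_le w hjm, pad_of_le w' hjm] at hj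
    exact lt_irrefl 0 hj
  have hdigit : (pad w j : ℝ) + 1 ≤ pad w' j := by exact_mod_cast hj
  have hstep : 1 / β ^ (m - j) ≤ suffixValue β w' j - suffixValue β w j := by
    rw [suffixValue_of_lt w hjm, suffixValue_of_lt w' hjm, ← sub_div,
      show m - j = m - (j + 1) + 1 by omega, pow_succ, ← div_div]
    gcongr
    linarith [hfull (j + 1) (by omega), suffixValue_nonneg hβ.le w' (j + 1)]
  have hdiff := suffixValue_sub_suffixValue hβ.ne' hjm.le fun i hi => (hagree i hi).symm
  have : 1 / β ^ m ≤ (suffixValue β w' j - suffixValue β w j) / β ^ j := by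
    calc 1 / β ^ m = 1 / β ^ (m - j) / β ^ j := by
          rw [div_div, ← pow_add, Nat.sub_add_cancel hjm.le]
      _ ≤ _ := by gcongr
  linarith

lemma IsFull.mem_suffixBoundedWords (hβ : 0 < β) {w : Fin m → ℕ} (h : IsFull β w) :
    w ∈ suffixBoundedWords β m := fun j hj =>
  (h j hj.le).trans_lt (sub_lt_self _ (by positivity))

lemma suffixBoundedWords_finite (hβ : 0 < β) : (suffixBoundedWords β m).Finite := by
  refine (Set.Finite.pi (t := fun _ : Fin m => Set.Iic ⌊β⌋₊) fun _ => Set.finite_Iic _).subset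
    fun w hw i _ => Nat.le_floor ?_
  have h := (div_le_suffixValue hβ.le w i.isLt).trans_lt (hw i i.isLt)
  rw [pad_of_lt w i.isLt, div_lt_one hβ] at h
  exact h.le

lemma ncard_isFull_le (hβ : 0 < β) : ({w | IsFull β w} : Set (Fin m → ℕ)).ncard ≤ β ^ m := by
  set φ : (Fin m → ℕ) → ℕ := fun w => ⌊β ^ m * suffixValue β w 0⌋₊
  have hpow : 0 < β ^ m := by positivity
  have hmaps : ∀ w ∈ {w | IsFull β w}, φ w ∈ (range ⌊β ^ m⌋₊ : Set ℕ) := fun w hw => by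
    have h := hw 0 m.zero_le
    rw [Nat.sub_zero] at h
    have : (φ w + 1 : ℝ) ≤ β ^ m := by
      have := Nat.floor_le (mul_nonneg hpow.le (suffixValue_nonneg hβ.le w 0))
      have : β ^ m * suffixValue β w 0 ≤ β ^ m - 1 := by
        calc _ ≤ β ^ m * (1 - 1 / β ^ m) := by gcongr
          _ = β ^ m - 1 := by field_simp
      linarith
    simp only [coe_range, Set.mem_Iio]
    exact Nat.lt_of_succ_le (Nat.le_floor (by exact_mod_cast this))
  have hlt : ∀ w w', IsFull β w → toLex (pad w) < toLex (pad w') → φ w < φ w' := by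
    intro w w' hw hlt
    have h := suffixValue_add_le_of_toLex_lt hβ hw hlt
    refine Nat.lt_of_succ_le (Nat.le_floor ?_)
    have := Nat.floor_le (mul_nonneg hpow.le (suffixValue_nonneg hβ.le w 0))
    have : β ^ m * suffixValue β w 0 + 1 ≤ β ^ m * suffixValue β w' 0 := by
      calc _ = β ^ m * (suffixValue β w 0 + 1 / β ^ m) := by field_simp
        _ ≤ _ := by gcongr
    push_cast
    linarith
  have hinj : Set.InjOn φ {w | IsFull β w} := fun w hw w' hw' hφ => by
    rcases lt_trichotomy (toLex (pad w)) (toLex (pad w')) with h | h | h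
    · exact absurd hφ (hlt w w' hw h).ne
    · exact pad_injective (toLex_inj.mp h)
    · exact absurd hφ (hlt w' w hw' h).ne'
  calc (({w | IsFull β w} : Set (Fin m → ℕ)).ncard : ℝ) ≤ (range ⌊β ^ m⌋₊ : Set ℕ).ncard := by
        exact_mod_cast Set.ncard_le_ncard_of_injOn φ hmaps hinj (finite_toSet _)
    _ ≤ β ^ m := by
        rw [Set.ncard_coe_finset, card_range]
        exact Nat.floor_le hpow.le

lemma last_lt_of_mem_suffixBoundedWords {w : Fin (m + 1) → ℕ}
    (hw : w ∈ suffixBoundedWords β (m + 1)) (hβ : 0 < β) {j : ℕ} (hj : j ≤ m) :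
    (w (Fin.last m) : ℝ) < (1 - suffixValue β (Fin.init w) j) * β ^ (m + 1 - j) := by
  have := hw j (by omega)
  rwa [suffixValue_init w hj, ← lt_sub_iff_add_lt', div_lt_iff₀ (by positivity)] at this

lemma exists_lt_last_add_one_of_not_isFull {w : Fin (m + 1) → ℕ} (hw : ¬ IsFull β w)
    (hβ : 0 < β) :
    ∃ j ≤ m, (1 - suffixValue β (Fin.init w) j) * β ^ (m + 1 - j) < w (Fin.last m) + 1 := by
  simp only [IsFull, not_forall, not_le] at hw
  obtain ⟨j, hj, hlt⟩ := hw
  have hjm : j ≤ m := by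
    by_contra! hjm
    rw [show j = m + 1 by omega, suffixValue_self, Nat.sub_self, pow_zero, div_one,
      sub_self] at hlt
    exact lt_irrefl 0 hlt
  refine ⟨j, hjm, ?_⟩
  rw [suffixValue_init w hjm] at hlt
  have hP : 0 < β ^ (m + 1 - j) := by positivity
  calc (1 - suffixValue β (Fin.init w) j) * β ^ (m + 1 - j)
      = (1 - (suffixValue β (Fin.init w) j + w (Fin.last m) / β ^ (m + 1 - j)))
          * β ^ (m + 1 - j) + w (Fin.last m) := by
        field_simp
        ring
    _ < 1 / β ^ (m + 1 - j) * β ^ (m + 1 - j) + w (Fin.last m) := by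
        gcongr
        linarith
    _ = w (Fin.last m) + 1 := by
        field_simp
        ring

/-- The last letter `a` of a non-full word is the natural number with `c j - 1 < a < c j'` for
some `j` and all `j'`, where `c j = (1 - v_j) β^{m+1-j}` only depends on `Fin.init w`. -/
lemma injOn_init (hβ : 0 < β) :
    Set.InjOn Fin.init {w ∈ suffixBoundedWords β (m + 1) | ¬ IsFull β w} := by
  rintro w ⟨hw, hwf⟩ w' ⟨hw', hwf'⟩ hinit
  obtain ⟨j, hj, hcj⟩ := exists_lt_last_add_one_of_not_isFull hwf hβ
  obtain ⟨j', hj', hcj'⟩ := exists_lt_last_add_one_of_not_isFull hwf' hβ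
  have h1 := last_lt_of_mem_suffixBoundedWords hw' hβ hj
  have h2 := last_lt_of_mem_suffixBoundedWords hw hβ hj'
  rw [← hinit] at h1
  rw [hinit] at h2
  have h3 : w' (Fin.last m) < w (Fin.last m) + 1 := by exact_mod_cast h1.trans hcj
  have h4 : w (Fin.last m) < w' (Fin.last m) + 1 := by exact_mod_cast h2.trans hcj'
  rw [← Fin.snoc_init_self w, ← Fin.snoc_init_self w', hinit, show w (Fin.last m) =
    w' (Fin.last m) by omega]

lemma ncard_suffixBoundedWords_le (hβ : 1 < β) (m : ℕ) :
    ((suffixBoundedWords β m).ncard : ℝ) ≤ ∑ i ∈ range (m + 1), β ^ i := by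
  have hβ0 : 0 < β := by linarith
  induction m with
  | zero =>
    have := Set.ncard_le_ncard (Set.subset_univ (suffixBoundedWords β 0))
    rw [Set.ncard_univ, Nat.card_unique] at this
    simpa using (by exact_mod_cast this : ((suffixBoundedWords β 0).ncard : ℝ) ≤ 1)
  | succ m ih =>
    have hsplit : suffixBoundedWords β (m + 1) ⊆
        {w | IsFull β w} ∪ {w ∈ suffixBoundedWords β (m + 1) | ¬ IsFull β w} := fun w hw => by
      by_cases h : IsFull β w
      exacts [Or.inl h, Or.inr ⟨hw, h⟩]
    have hnotFull : {w ∈ suffixBoundedWords β (m + 1) | ¬ IsFull β w}.ncard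
        ≤ (suffixBoundedWords β m).ncard := by
      refine Set.ncard_le_ncard_of_injOn Fin.init (fun w ⟨hw, _⟩ j hj => ?_) (injOn_init hβ0)
        (suffixBoundedWords_finite hβ0)
      have := hw j (by omega)
      rw [suffixValue_init w hj.le] at this
      linarith [show (0 : ℝ) ≤ w (Fin.last m) / β ^ (m + 1 - j) by positivity]
    have hunion := (Set.ncard_le_ncard hsplit
      ((suffixBoundedWords_finite hβ0).subset fun w hw => hw.elim (·.mem_suffixBoundedWords hβ0)
        (·.1))).trans (Set.ncard_union_le _ _)
    rw [sum_range_succ]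
    have : ((suffixBoundedWords β (m + 1)).ncard : ℝ)
        ≤ ({w | IsFull β w} : Set (Fin (m + 1) → ℕ)).ncard
          + ({w ∈ suffixBoundedWords β (m + 1) | ¬ IsFull β w}.ncard : ℝ) := by
      exact_mod_cast hunion
    linarith [ncard_isFull_le hβ0 (m := m + 1), (Nat.cast_le (α := ℝ)).mpr hnotFull]

end SuffixValue

lemma squeeze_mem_suffixBoundedWords {β β₂ : ℝ} (hβ : 1 < β) (hββ₂ : β ≤ β₂) {n k : ℕ}
    (hk : k ≠ 0) {ω : Fin n → ℕ} (hd : ∀ i : Fin n, digit β 1 i = ω i) :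
    squeeze n k ω ∈ suffixBoundedWords β₂ (n - k) := by
  have hβ0 : 0 < β := by linarith
  set v : Fin (n - k) → ℕ := fun i => digit β 1 (i + k)
  have hle (i : ℕ) : pad (squeeze n k ω) i ≤ pad v i := by
    rw [pad_squeeze]
    by_cases hi : i < n - k
    · rw [pad_of_lt v hi, pad_of_lt ω (by omega), ← hd]
      split_ifs
      exacts [Nat.zero_le _, le_rfl]
    · rw [pad_of_le ω (by omega), ite_self]
      exact Nat.zero_le _
  intro j hj
  calc suffixValue β₂ (squeeze n k ω) j
      ≤ suffixValue β₂ v j := suffixValue_mono (by linarith) hle j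
    _ ≤ suffixValue β v j := suffixValue_anti_base hβ0 hββ₂ v j
    _ = (Tb β)^[j + k] 1 - (Tb β)^[n - k + k] 1 / β ^ (n - k - j) :=
        suffixValue_digit hβ0 zero_le_one k hj.le
    _ ≤ (Tb β)^[j + k] 1 :=
        sub_le_self _ (div_nonneg (Tb_iterate_nonneg zero_le_one _) (by positivity))
    _ < 1 := Tb_iterate_lt_one (by omega)

lemma finite_and_ncard_le_of_injOn {α : Type*} {S : Set α} {β : ℝ} (hβ : 1 < β) {m : ℕ}
    {f : α → Fin m → ℕ} (hmaps : Set.MapsTo f S (suffixBoundedWords β m)) (hinj : Set.InjOn f S) :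
    S.Finite ∧ (S.ncard : ℝ) ≤ β ^ (m + 1) / (β - 1) := by
  have hfin := suffixBoundedWords_finite (β := β) (m := m) (by linarith)
  refine ⟨.of_finite_image (hfin.subset hmaps.image_subset) hinj, ?_⟩
  calc (S.ncard : ℝ) ≤ (suffixBoundedWords β m).ncard := by
        exact_mod_cast Set.ncard_le_ncard_of_injOn f hmaps hinj hfin
    _ ≤ ∑ i ∈ range (m + 1), β ^ i := ncard_suffixBoundedWords_le hβ m
    _ ≤ β ^ (m + 1) / (β - 1) := by
        rw [geom_sum_eq hβ.ne']
        gcongr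
        linarith

theorem card_LamNK_general (β₁ β₂ : ℝ) (h1 : 1 < β₁) (h12 : β₁ < β₂) (n k : ℕ)
    (hk : 1 ≤ k) :
    letI S : Set (Fin n → ℕ) :=
      {ω | ω ∈ LamN β₁ β₂ n ∧ ∀ j, tW ω ≤ j → j < tW ω + k → pad ω j = 0}
    S.Finite ∧ (S.ncard : ℝ) ≤ β₂ ^ (n - k + 1) / (β₂ - 1) := by
  refine finite_and_ncard_le_of_injOn (h1.trans h12) (f := squeeze n k)
    (fun ω ⟨⟨β, hβ, hββ₂, hd⟩, _⟩ =>
      squeeze_mem_suffixBoundedWords (h1.trans hβ) hββ₂ (by omega) hd) ?_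
  rcases Nat.eq_zero_or_pos n with rfl | hn
  · exact fun ω _ ϖ _ _ => Subsingleton.elim ω ϖ
  refine (injOn_squeeze (by omega)).mono fun ω ⟨⟨β, hβ, _, hd⟩, hz⟩ => ?_
  exact ⟨selfAdmissible_of_digit_eq (h1.trans hβ) hd, pad_zero_ne_zero (h1.trans hβ) hn hd,
    fun j hj => hz j hj.1 hj.2⟩

theorem card_LamNK (β₁ β₂ : ℝ) (h1 : 1 < β₁) (h12 : β₁ < β₂) (n k : ℕ)
    (hk : 1 ≤ k) (hkn : k < n) :
    letI S : Set (Fin n → ℕ) :=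
      {ω | ω ∈ LamN β₁ β₂ n ∧ ∀ j, tW ω ≤ j → j < tW ω + k → pad ω j = 0}
    S.Finite ∧ (S.ncard : ℝ) ≤ β₂ ^ (n - k + 1) / (β₂ - 1) :=
  card_LamNK_general β₁ β₂ h1 h12 n k hk
end
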